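/- arXiv:2003.02420 — 7 statements merged into one kernel-verified Lean document; each statement's English description precedes it below -/
import Mathlib

section
/- For every update family 𝒰, the stable set 𝒮(𝒰) is a finite (possibly empty) union of closed arcs of S¹ both of whose endpoints are rational directions; in particular 𝒮(𝒰) is a closed subset of S¹. -/
open scoped BigOperators

/-- Points of the plane lattice ℤ². -/
abbrev Pt : Type := ℤ × ℤ

noncomputable section

/-- Inner product of an integer point with a real vector. -/
def dotIR (x : Pt) (u : ℝ × ℝ) : ℝ := (x.1 : ℝ) * u.1 + (x.2 : ℝ) * u.2

/-- Inner product of two real vectors. -/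
def dotRR (u v : ℝ × ℝ) : ℝ := u.1 * v.1 + u.2 * v.2

/-- The unit circle S¹ ⊆ ℝ². -/
def unitCircle : Set (ℝ × ℝ) := {u | u.1 ^ 2 + u.2 ^ 2 = 1}

/-- The discrete half-plane H_u = {x ∈ ℤ² : ⟨x,u⟩ < 0}. -/
def halfPlane (u : ℝ × ℝ) : Set Pt := {x | dotIR x u < 0}

/-- An update family: a finite nonempty family of finite subsets of ℤ²∖{0}. -/
def UpdateFamily (𝒰 : Finset (Finset Pt)) : Prop :=
  𝒰.Nonempty ∧ ∀ X ∈ 𝒰, (0 : Pt) ∉ X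

/-- One step of 𝒰-bootstrap percolation. -/
def bootStep (𝒰 : Finset (Finset Pt)) (A : Set Pt) : Set Pt :=
  A ∪ {x : Pt | ∃ X ∈ 𝒰, ∀ v ∈ X, x + v ∈ A}

/-- Iterates of 𝒰-bootstrap percolation. -/
def bootIter (𝒰 : Finset (Finset Pt)) : ℕ → Set Pt → Set Pt
  | 0, A => A
  | n + 1, A => bootStep 𝒰 (bootIter 𝒰 n A)

/-- The 𝒰-bootstrap closure [A] = ⋃_t A_t. -/
def bootClosure (𝒰 : Finset (Finset Pt)) (A : Set Pt) : Set Pt :=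
  ⋃ n : ℕ, bootIter 𝒰 n A

/-- The stable set 𝒮(𝒰) = {u ∈ S¹ : X ⊄ H_u for all X ∈ 𝒰}. -/
def stableSet (𝒰 : Finset (Finset Pt)) : Set (ℝ × ℝ) :=
  {u | u ∈ unitCircle ∧ ∀ X ∈ 𝒰, ¬((X : Set Pt) ⊆ halfPlane u)}

/-- A rational direction: u = z/‖z‖ for some z ∈ ℤ²∖{0}. -/
def IsRationalDir (u : ℝ × ℝ) : Prop :=
  ∃ z : Pt, z ≠ 0 ∧
    u = ((z.1 : ℝ) / Real.sqrt ((z.1 : ℝ) ^ 2 + (z.2 : ℝ) ^ 2),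
         (z.2 : ℝ) / Real.sqrt ((z.1 : ℝ) ^ 2 + (z.2 : ℝ) ^ 2))

/-- Critical family: some (closed) semicircle meets 𝒮(𝒰) in a finite set and every open
semicircle meets 𝒮(𝒰). -/
def Critical (𝒰 : Finset (Finset Pt)) : Prop :=
  (∃ u ∈ unitCircle, (stableSet 𝒰 ∩ {w | 0 ≤ dotRR u w}).Finite) ∧
  ∀ u ∈ unitCircle, (stableSet 𝒰 ∩ {w | 0 < dotRR u w}).Nonempty

/-- Supercritical family: some open semicircle is disjoint from 𝒮(𝒰). -/
def Supercritical (𝒰 : Finset (Finset Pt)) : Prop :=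
  ∃ u ∈ unitCircle, stableSet 𝒰 ∩ {w | 0 < dotRR u w} = ∅

/-- Subcritical family: every semicircle has infinite intersection with 𝒮(𝒰). -/
def Subcritical (𝒰 : Finset (Finset Pt)) : Prop :=
  ∀ u ∈ unitCircle, (stableSet 𝒰 ∩ {w | 0 ≤ dotRR u w}).Infinite

/-- The translated half-plane H_u + a. -/
def translHalfPlane (u : ℝ × ℝ) (a : Pt) : Set Pt := {x | dotIR (x - a) u < 0}

/-- A 𝒯-droplet: a nonempty intersection ⋂_{u ∈ 𝒯} (H_u + a_u). -/
def IsDroplet (𝒯 : Finset (ℝ × ℝ)) (D : Set Pt) : Prop :=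
  D.Nonempty ∧ ∃ a : (ℝ × ℝ) → Pt, D = ⋂ u ∈ 𝒯, translHalfPlane u (a u)

/-- Euclidean distance between two lattice points. -/
def edist2 (x y : Pt) : ℝ :=
  Real.sqrt (((x.1 : ℝ) - (y.1 : ℝ)) ^ 2 + ((x.2 : ℝ) - (y.2 : ℝ)) ^ 2)

/-- Diameter of a set of lattice points (w.r.t. the Euclidean distance). -/
def diam (D : Set Pt) : ℝ :=
  sSup {d : ℝ | ∃ x ∈ D, ∃ y ∈ D, d = edist2 x y}

/-- Translate of a set of lattice points. -/
def translatePt (a : Pt) (D : Set Pt) : Set Pt := (fun x => a + x) '' D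

/-- The initial collection of the covering algorithm: one copy of D̂ per element of A. -/
def initColl (Dhat : Set Pt) (A : Finset Pt) : Multiset (Set Pt) :=
  A.val.map (fun a => translatePt a Dhat)

/-- Two sets lie within Euclidean distance κ of each other. -/
def DropletsClose (κ : ℝ) (D E : Set Pt) : Prop :=
  ∃ x ∈ D, ∃ y ∈ E, edist2 x y ≤ κ

/-- D is the smallest 𝒯-droplet containing S. -/
def SmallestDroplet (𝒯 : Finset (ℝ × ℝ)) (S : Set Pt) (D : Set Pt) : Prop :=
  IsDroplet 𝒯 D ∧ S ⊆ D ∧ ∀ D' : Set Pt, IsDroplet 𝒯 D' → S ⊆ D' → D ⊆ D'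

/-- One merging step of the covering algorithm. -/
def MergeStep (κ : ℝ) (𝒯 : Finset (ℝ × ℝ)) (C C' : Multiset (Set Pt)) : Prop :=
  ∃ (D₁ D₂ D₃ : Set Pt) (C₀ : Multiset (Set Pt)),
    C = D₁ ::ₘ D₂ ::ₘ C₀ ∧ DropletsClose κ D₁ D₂ ∧
    SmallestDroplet 𝒯 (D₁ ∪ D₂) D₃ ∧ C' = D₃ ::ₘ C₀

/-- A terminal collection: all pairwise distances exceed κ. -/
def TerminalColl (κ : ℝ) (C : Multiset (Set Pt)) : Prop :=
  ∀ (D₁ D₂ : Set Pt) (C₀ : Multiset (Set Pt)),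
    C = D₁ ::ₘ D₂ ::ₘ C₀ → ¬ DropletsClose κ D₁ D₂

/-- D̂ is a valid base droplet for the covering algorithm with parameter κ:
a finite 𝒯-droplet containing 0 with κ/2 ≤ diam(D̂) ≤ κ. -/
def GoodBase (κ : ℝ) (𝒯 : Finset (ℝ × ℝ)) (Dhat : Set Pt) : Prop :=
  IsDroplet 𝒯 Dhat ∧ Dhat.Finite ∧ (0 : Pt) ∈ Dhat ∧ κ / 2 ≤ diam Dhat ∧ diam Dhat ≤ κ

/-- The collection C is reachable by the covering algorithm started from A. -/
def Reachable (κ : ℝ) (𝒯 : Finset (ℝ × ℝ)) (Dhat : Set Pt) (A : Finset Pt)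
    (C : Multiset (Set Pt)) : Prop :=
  Relation.ReflTransGen (MergeStep κ 𝒯) (initColl Dhat A) C

/-- A droplet is covered by A if it belongs to some collection arising during some
execution of the covering algorithm. -/
def CoveredBy (κ : ℝ) (𝒯 : Finset (ℝ × ℝ)) (Dhat : Set Pt) (A : Finset Pt)
    (D : Set Pt) : Prop :=
  ∃ C : Multiset (Set Pt), Reachable κ 𝒯 Dhat A C ∧ D ∈ C

/-- The lattice line l_y = {x ∈ ℤ² : ⟨x,y⟩ = 0}. -/
def lineLat (y : ℝ × ℝ) : Set Pt := {x | dotIR x y = 0}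

/-- w generates the rank-one lattice l_y. -/
def GeneratesLine (w : Pt) (y : ℝ × ℝ) : Prop :=
  lineLat y = Set.range (fun k : ℤ => ((k * w.1, k * w.2) : Pt))

/-- The segment Y = {z₀ + j·w : 0 ≤ j < L} of L consecutive points of l_y. -/
def segmentY (z₀ w : Pt) (L : ℕ) : Finset Pt :=
  (Finset.range L).image (fun j : ℕ => ((z₀.1 + (j : ℤ) * w.1, z₀.2 + (j : ℤ) * w.2) : Pt))

open Classical in
/-- The configuration of ℤ² determined by η ∈ {+,−}^Y: state − (false) on H_y, the values of η
on Y, and + (true) elsewhere. -/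
def sigmaCfg (y : ℝ × ℝ) (Y : Finset Pt) (η : Pt → Bool) (x : Pt) : Bool :=
  if x ∈ halfPlane y then false else if x ∈ Y then η x else true

/-- r_v(η): the number of rules X ∈ 𝒰 such that every point of v + X has state opposite
to that of v (in the configuration σ_η). -/
def rval (𝒰 : Finset (Finset Pt)) (y : ℝ × ℝ) (Y : Finset Pt) (η : Pt → Bool) (v : Pt) : ℕ :=
  {X : Finset Pt | X ∈ 𝒰 ∧ ∀ p ∈ X, sigmaCfg y Y η (v + p) = !(sigmaCfg y Y η v)}.ncard

/-- η with the state at v flipped. -/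
def flipAt (η : Pt → Bool) (v : Pt) : Pt → Bool := fun x => if x = v then !(η x) else η x

/-- The generator 𝕍 of the restricted 1-dimensional 𝒰-voter dynamics on Y. -/
def genV (𝒰 : Finset (Finset Pt)) (y : ℝ × ℝ) (Y : Finset Pt)
    (g : (Pt → Bool) → ℝ) (η : Pt → Bool) : ℝ :=
  ∑ v ∈ Y, ((rval 𝒰 y Y η v : ℝ) / (𝒰.card : ℝ)) * (g (flipAt η v) - g η)

/-- The natural projection ℤ² → ℤ²_n. -/
def torusProj (n : ℕ) (v : Pt) : ZMod n × ZMod n := ((v.1 : ZMod n), (v.2 : ZMod n))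

/-- One step of 𝒰-bootstrap percolation on the torus ℤ²_n. -/
def torusStep (n : ℕ) (𝒰 : Finset (Finset Pt)) (A : Set (ZMod n × ZMod n)) :
    Set (ZMod n × ZMod n) :=
  A ∪ {x | ∃ X ∈ 𝒰, ∀ v ∈ X, x + torusProj n v ∈ A}

/-- Iterates of 𝒰-bootstrap percolation on the torus. -/
def torusIter (n : ℕ) (𝒰 : Finset (Finset Pt)) :
    ℕ → Set (ZMod n × ZMod n) → Set (ZMod n × ZMod n)
  | 0, A => A
  | t + 1, A => torusStep n 𝒰 (torusIter n 𝒰 t A)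

/-- The 𝒰-bootstrap closure on the torus. -/
def torusClosure (n : ℕ) (𝒰 : Finset (Finset Pt)) (A : Set (ZMod n × ZMod n)) :
    Set (ZMod n × ZMod n) :=
  ⋃ t : ℕ, torusIter n 𝒰 t A

open Classical in
/-- ℙ_p([A] = ℤ²_n) for a p-random subset A of ℤ²_n (Bernoulli product measure written as
a finite sum over configurations). -/
def percProb (n : ℕ) (𝒰 : Finset (Finset Pt)) (p : ℝ) : ℝ :=
  if h : n = 0 then 0 else
    haveI : NeZero n := ⟨h⟩
    ∑ ω : ZMod n × ZMod n → Bool,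
      (if torusClosure n 𝒰 {x | ω x = true} = Set.univ then (1 : ℝ) else 0) *
        p ^ (Finset.univ.filter (fun x => ω x = true)).card *
        (1 - p) ^ (Finset.univ.filter (fun x => ω x = false)).card

/-- The critical probability p_c(ℤ²_n, 𝒰). -/
def pCrit (n : ℕ) (𝒰 : Finset (Finset Pt)) : ℝ :=
  sInf {p : ℝ | p ∈ Set.Icc (0 : ℝ) 1 ∧ 1 / 2 ≤ percProb n 𝒰 p}

/-- The point of S¹ at angle θ. -/
def circlePt (θ : ℝ) : ℝ × ℝ := (Real.cos θ, Real.sin θ)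

end

/-!
The stable set is cut out of S¹ by finitely many closed conditions `0 ≤ ⟨x, u⟩`, so it is closed.
Along the circle, membership can only change where some `⟨x, u⟩` (with `x` in a rule) changes
sign, i.e. at the finitely many critical directions `±(-x₂, x₁)/‖x‖`, which are rational. By the
intermediate value theorem membership is constant on each open arc between consecutive critical
directions, so by closedness the stable set is the union of the closed arcs whose interior it
meets, together with isolated critical directions.
-/

open Set Real

lemma circlePt_periodic : Function.Periodic circlePt (2 * π) := fun θ => by
  simp [circlePt]

lemma circlePt_mem_unitCircle (θ : ℝ) : circlePt θ ∈ unitCircle := by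
  simp [circlePt, unitCircle]

lemma continuous_circlePt : Continuous circlePt := by
  unfold circlePt; fun_prop

lemma exists_circlePt_eq {u : ℝ × ℝ} (hu : u ∈ unitCircle) : ∃ θ, circlePt θ = u := by
  set z : ℂ := ⟨u.1, u.2⟩
  have hz : ‖z‖ = 1 := by
    rw [Complex.norm_def, Complex.normSq_mk, ← sq, ← sq, hu.out, Real.sqrt_one]
  have hz0 : z ≠ 0 := by rw [← norm_ne_zero_iff, hz]; exact one_ne_zero
  refine ⟨Complex.arg z, Prod.ext ?_ ?_⟩
  · simpa [circlePt, hz, z] using Complex.cos_arg hz0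
  · simpa [circlePt, hz, z] using Complex.sin_arg z

lemma exists_circlePt_eq_of_mem_Ico {u : ℝ × ℝ} (hu : u ∈ unitCircle) (a : ℝ) :
    ∃ θ ∈ Ico a (a + 2 * π), circlePt θ = u := by
  obtain ⟨θ, rfl⟩ := exists_circlePt_eq hu
  refine ⟨toIcoMod two_pi_pos a θ, toIcoMod_mem_Ico _ _ _, ?_⟩
  rw [toIcoMod, circlePt_periodic.sub_zsmul_eq]

lemma injOn_circlePt_Ico (a : ℝ) : InjOn circlePt (Ico a (a + 2 * π)) := by
  intro s hs t ht hst
  refine Circle.exp_injOn_Ico (by linarith) hs ht (Subtype.ext (Complex.ext ?_ ?_))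
  · simpa [circlePt, Circle.coe_exp, Complex.exp_ofReal_mul_I_re] using congrArg Prod.fst hst
  · simpa [circlePt, Circle.coe_exp, Complex.exp_ofReal_mul_I_im] using congrArg Prod.snd hst

lemma finite_circlePt_preimage_inter_Icc {D : Set (ℝ × ℝ)} (hD : D.Finite) (a : ℝ) :
    (circlePt ⁻¹' D ∩ Icc a (a + 2 * π)).Finite := by
  have hIco : (circlePt ⁻¹' D ∩ Ico a (a + 2 * π)).Finite :=
    Finite.of_finite_image (hD.subset (image_subset_iff.2 inter_subset_left))
      ((injOn_circlePt_Ico a).mono inter_subset_right)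
  refine (hIco.union (finite_singleton (a + 2 * π))).subset ?_
  rintro θ ⟨hθD, hθa, hθb⟩
  rcases hθb.lt_or_eq with h | h
  · exact Or.inl ⟨hθD, hθa, h⟩
  · exact Or.inr h

lemma exists_Icc_subset_of_isClosed {T Θ : Set ℝ} {a b θ : ℝ} (hT : IsClosed T)
    (hΘ : (Θ ∩ Icc a b).Finite) (ha : a ∈ Θ) (hb : b ∈ Θ)
    (hconst : ∀ s t, s ≤ t → Disjoint (Icc s t) Θ → (s ∈ T ↔ t ∈ T))
    (hθ : θ ∈ Icc a b) (hθT : θ ∈ T) :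
    ∃ s ∈ Θ ∩ Icc a b, ∃ t ∈ Θ ∩ Icc a b, θ ∈ Icc s t ∧ Icc s t ⊆ T := by
  by_cases hθΘ : θ ∈ Θ
  · exact ⟨θ, ⟨hθΘ, hθ⟩, θ, ⟨hθΘ, hθ⟩, left_mem_Icc.2 le_rfl, by simpa using hθT⟩
  obtain ⟨s, ⟨hsΘ, has, hsθ⟩, hs_max⟩ := exists_max_image (Θ ∩ Icc a θ) id
    (hΘ.subset fun ψ hψ => ⟨hψ.1, hψ.2.1, hψ.2.2.trans hθ.2⟩) ⟨a, ha, le_rfl, hθ.1⟩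
  obtain ⟨t, ⟨htΘ, hθt, htb⟩, ht_min⟩ := exists_min_image (Θ ∩ Icc θ b) id
    (hΘ.subset fun ψ hψ => ⟨hψ.1, hθ.1.trans hψ.2.1, hψ.2.2⟩) ⟨b, hb, hθ.2, le_rfl⟩
  have hsθ' : s < θ := hsθ.lt_of_ne fun h => hθΘ (h ▸ hsΘ)
  have hθt' : θ < t := hθt.lt_of_ne fun h => hθΘ (h ▸ htΘ)
  have hgap : Disjoint (Ioo s t) Θ := by
    refine disjoint_left.2 fun ψ hψ hψΘ => ?_
    rcases le_total ψ θ with h | h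
    · exact hψ.1.not_ge (hs_max ψ ⟨hψΘ, has.trans hψ.1.le, h⟩)
    · exact hψ.2.not_ge (ht_min ψ ⟨hψΘ, h, hψ.2.le.trans htb⟩)
  have hIoo : Ioo s t ⊆ T := fun ψ hψ => by
    rcases le_total ψ θ with h | h
    · exact (hconst ψ θ h (hgap.mono_left (Icc_subset_Ioo hψ.1 hθt'))).2 hθT
    · exact (hconst θ ψ h (hgap.mono_left (Icc_subset_Ioo hsθ' hψ.2))).1 hθT
  refine ⟨s, ⟨hsΘ, has, hsθ.trans hθ.2⟩, t, ⟨htΘ, hθ.1.trans hθt, htb⟩, ⟨hsθ, hθt⟩, ?_⟩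
  rw [← closure_Ioo (hsθ'.trans hθt').ne]
  exact closure_minimal hIoo hT

theorem exists_arcs_of_isClosed {S D : Set (ℝ × ℝ)} (hS : IsClosed S) (hSu : S ⊆ unitCircle)
    (hD : D.Finite) {b₀ : ℝ} (hb₀ : circlePt b₀ ∈ D)
    (hconst : ∀ s t, s ≤ t → Disjoint (Icc s t) (circlePt ⁻¹' D) →
      (circlePt s ∈ S ↔ circlePt t ∈ S)) :
    ∃ (k : ℕ) (α β : Fin k → ℝ), (∀ i, α i ≤ β i ∧ β i ≤ α i + 2 * π) ∧
      (∀ i, circlePt (α i) ∈ D ∧ circlePt (β i) ∈ D) ∧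
      S = ⋃ i : Fin k, circlePt '' Icc (α i) (β i) := by
  classical
  -- Angles are taken in the window `[b₀, b₀ + 2π]` with both ends critical, so every arc found
  -- there automatically has length at most `2π`.
  have hF := finite_circlePt_preimage_inter_Icc hD b₀
  set I : Finset (ℝ × ℝ) := (hF.toFinset ×ˢ hF.toFinset).filter
    fun p => p.1 ≤ p.2 ∧ Icc p.1 p.2 ⊆ circlePt ⁻¹' S with hI
  have hmemI : ∀ p ∈ I, (circlePt p.1 ∈ D ∧ b₀ ≤ p.1) ∧ (circlePt p.2 ∈ D ∧ p.2 ≤ b₀ + 2 * π) ∧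
      p.1 ≤ p.2 ∧ Icc p.1 p.2 ⊆ circlePt ⁻¹' S := by
    intro p hp
    simp only [hI, Finset.mem_filter, Finset.mem_product, Finite.mem_toFinset] at hp
    exact ⟨⟨hp.1.1.1, hp.1.1.2.1⟩, ⟨hp.1.2.1, hp.1.2.2.2⟩, hp.2⟩
  have hS_eq : S = ⋃ p ∈ I, circlePt '' Icc p.1 p.2 := by
    refine Subset.antisymm (fun u hu => ?_) (iUnion₂_subset fun p hp => ?_)
    · obtain ⟨θ, hθ, rfl⟩ := exists_circlePt_eq_of_mem_Ico (hSu hu) b₀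
      obtain ⟨s, hs, t, ht, hθst, hst⟩ := exists_Icc_subset_of_isClosed
        (hS.preimage continuous_circlePt) hF hb₀ (by rwa [mem_preimage, circlePt_periodic]) hconst
        (Ico_subset_Icc_self hθ) hu
      refine mem_iUnion₂.2 ⟨(s, t), ?_, θ, hθst, rfl⟩
      simp only [hI, Finset.mem_filter, Finset.mem_product, Finite.mem_toFinset]
      exact ⟨⟨hs, ht⟩, hθst.1.trans hθst.2, hst⟩
    · exact image_subset_iff.2 (hmemI p hp).2.2.2
  refine ⟨I.card, fun i => (I.equivFin.symm i).1.1, fun i => (I.equivFin.symm i).1.2,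
    fun i => ?_, fun i => ?_, ?_⟩
  · obtain ⟨⟨-, h₁⟩, ⟨-, h₂⟩, h, -⟩ := hmemI _ (I.equivFin.symm i).2
    exact ⟨h, by linarith⟩
  · obtain ⟨⟨h₁, -⟩, ⟨h₂, -⟩, -⟩ := hmemI _ (I.equivFin.symm i).2
    exact ⟨h₁, h₂⟩
  · rw [hS_eq, I.equivFin.symm.surjective.iUnion_comp (fun p => circlePt '' Icc p.1.1 p.1.2)]
    simp [iUnion_subtype]

noncomputable def unitDir (z : Pt) : ℝ × ℝ :=
  ((z.1 : ℝ) / √((z.1 : ℝ) ^ 2 + (z.2 : ℝ) ^ 2), (z.2 : ℝ) / √((z.1 : ℝ) ^ 2 + (z.2 : ℝ) ^ 2))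

def rot90 (x : Pt) : Pt := (-x.2, x.1)

lemma rot90_ne_zero {x : Pt} (hx : x ≠ 0) : rot90 x ≠ 0 := by
  simpa [rot90, Prod.ext_iff, and_comm] using hx

lemma sq_add_sq_pos {x : Pt} (hx : x ≠ 0) : 0 < (x.1 : ℝ) ^ 2 + (x.2 : ℝ) ^ 2 := by
  have : (x.1 : ℝ) ≠ 0 ∨ (x.2 : ℝ) ≠ 0 := by
    rw [← not_and_or]; simpa [Prod.ext_iff] using hx
  rcases this with h | h <;> positivity

lemma unitDir_mem_unitCircle {z : Pt} (hz : z ≠ 0) : unitDir z ∈ unitCircle := by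
  have h := sq_add_sq_pos hz
  simp only [unitDir, unitCircle, mem_ofPred_eq, div_pow, sq_sqrt h.le]
  field_simp

lemma dotIR_unitDir_rot90 (x : Pt) : dotIR x (unitDir (rot90 x)) = 0 := by
  simp only [dotIR, unitDir, rot90]
  push_cast
  ring

lemma eq_unitDir_rot90_of_dotIR_eq_zero {x : Pt} (hx : x ≠ 0) {u : ℝ × ℝ}
    (hu : u ∈ unitCircle) (h : dotIR x u = 0) :
    u = unitDir (rot90 x) ∨ u = unitDir (rot90 (-x)) := by
  obtain ⟨c, d⟩ := x
  obtain ⟨u₁, u₂⟩ := u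
  have hpos := sq_add_sq_pos hx
  simp only [unitCircle, mem_ofPred_eq] at hu
  simp only [dotIR] at h hpos
  set r := √((c : ℝ) ^ 2 + (d : ℝ) ^ 2)
  have hr : r ≠ 0 := (sqrt_pos.2 hpos).ne'
  have hr2 : r ^ 2 = (c : ℝ) ^ 2 + (d : ℝ) ^ 2 := sq_sqrt hpos.le
  -- Lagrange's identity: the cross product of x and u has the length of x.
  have hw : (c * u₂ - d * u₁ : ℝ) ^ 2 = r ^ 2 := by
    linear_combination (↑c ^ 2 + ↑d ^ 2) * hu - (↑c * u₁ + ↑d * u₂) * h - hr2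
  have h₁ : u₁ * r ^ 2 = -d * (c * u₂ - d * u₁) := by linear_combination c * h + u₁ * hr2
  have h₂ : u₂ * r ^ 2 = c * (c * u₂ - d * u₁) := by linear_combination d * h + u₂ * hr2
  have hr' : √((-(d : ℝ)) ^ 2 + (c : ℝ) ^ 2) = r := by rw [neg_sq, add_comm]
  have hr'' : √((d : ℝ) ^ 2 + (-(c : ℝ)) ^ 2) = r := by rw [neg_sq, add_comm]
  simp only [unitDir, rot90, Prod.neg_mk, neg_neg, Int.cast_neg, hr', hr'', Prod.mk.injEq]
  rcases sq_eq_sq_iff_eq_or_eq_neg.1 hw with hw | hw <;> rw [hw] at h₁ h₂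
  · refine Or.inl ⟨?_, ?_⟩ <;> rw [eq_div_iff hr] <;> apply mul_right_cancel₀ hr
    · linear_combination h₁
    · linear_combination h₂
  · refine Or.inr ⟨?_, ?_⟩ <;> rw [eq_div_iff hr] <;> apply mul_right_cancel₀ hr
    · linear_combination h₁
    · linear_combination h₂

lemma mem_stableSet_iff {𝒰 : Finset (Finset Pt)} {u : ℝ × ℝ} :
    u ∈ stableSet 𝒰 ↔ u ∈ unitCircle ∧ ∀ X ∈ 𝒰, ∃ x ∈ X, 0 ≤ dotIR x u := by
  simp [stableSet, halfPlane, not_subset]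

lemma isClosed_stableSet (𝒰 : Finset (Finset Pt)) : IsClosed (stableSet 𝒰) := by
  have h : stableSet 𝒰 = (fun u : ℝ × ℝ => u.1 ^ 2 + u.2 ^ 2) ⁻¹' {1} ∩
      ⋂ X ∈ 𝒰, ⋃ x ∈ X, {u | 0 ≤ dotIR x u} := by
    ext u; simp [mem_stableSet_iff, unitCircle]
  rw [h]
  refine (isClosed_singleton.preimage (by fun_prop)).inter
    (isClosed_biInter fun X _ => X.finite_toSet.isClosed_biUnion fun x _ => ?_)
  exact isClosed_le continuous_const (by unfold dotIR; fun_prop)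

lemma nonneg_iff_nonneg_of_forall_ne_zero {f : ℝ → ℝ} {s t : ℝ} (hst : s ≤ t)
    (hf : ContinuousOn f (Icc s t)) (h0 : ∀ ψ ∈ Icc s t, f ψ ≠ 0) : 0 ≤ f s ↔ 0 ≤ f t := by
  by_contra h
  have h0mem : (0 : ℝ) ∈ uIcc (f s) (f t) := by
    rw [mem_uIcc]
    by_cases hs : 0 ≤ f s
    · exact Or.inr ⟨(not_le.1 fun ht => h (iff_of_true hs ht)).le, hs⟩
    · exact Or.inl ⟨(not_le.1 hs).le, not_not.1 fun ht => h (iff_of_false hs ht)⟩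
  rw [← uIcc_of_le hst] at hf h0
  obtain ⟨ψ, hψ, hψ0⟩ := intermediate_value_uIcc hf h0mem
  exact h0 ψ hψ hψ0

def criticalDirs (𝒰 : Finset (Finset Pt)) : Set (ℝ × ℝ) :=
  {u ∈ unitCircle | ∃ X ∈ 𝒰, ∃ x ∈ X, dotIR x u = 0}

section criticalDirs

variable {𝒰 : Finset (Finset Pt)}

lemma finite_criticalDirs (h0 : ∀ X ∈ 𝒰, (0 : Pt) ∉ X) : (criticalDirs 𝒰).Finite := by
  refine (𝒰.finite_toSet.biUnion fun X _ => X.finite_toSet.biUnion fun x _ =>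
    toFinite {unitDir (rot90 x), unitDir (rot90 (-x))}).subset ?_
  rintro u ⟨hu, X, hX, x, hx, h⟩
  simp only [mem_iUnion₂]
  exact ⟨X, hX, x, hx, eq_unitDir_rot90_of_dotIR_eq_zero (ne_of_mem_of_not_mem hx (h0 X hX)) hu h⟩

lemma isRationalDir_of_mem_criticalDirs (h0 : ∀ X ∈ 𝒰, (0 : Pt) ∉ X) {u : ℝ × ℝ}
    (hu : u ∈ criticalDirs 𝒰) : IsRationalDir u := by
  obtain ⟨hu, X, hX, x, hx, h⟩ := hu
  have hx0 : x ≠ 0 := ne_of_mem_of_not_mem hx (h0 X hX)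
  rcases eq_unitDir_rot90_of_dotIR_eq_zero hx0 hu h with rfl | rfl
  exacts [⟨_, rot90_ne_zero hx0, rfl⟩, ⟨_, rot90_ne_zero (neg_ne_zero.2 hx0), rfl⟩]

lemma exists_circlePt_mem_criticalDirs {X : Finset Pt} {x : Pt} (hX : X ∈ 𝒰) (hx : x ∈ X)
    (hx0 : x ≠ 0) : ∃ θ, circlePt θ ∈ criticalDirs 𝒰 := by
  have hu := unitDir_mem_unitCircle (rot90_ne_zero hx0)
  obtain ⟨θ, hθ⟩ := exists_circlePt_eq hu
  exact ⟨θ, hθ ▸ ⟨hu, X, hX, x, hx, dotIR_unitDir_rot90 x⟩⟩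

lemma circlePt_mem_stableSet_iff_of_disjoint {s t : ℝ} (hst : s ≤ t)
    (hdisj : Disjoint (Icc s t) (circlePt ⁻¹' criticalDirs 𝒰)) :
    circlePt s ∈ stableSet 𝒰 ↔ circlePt t ∈ stableSet 𝒰 := by
  simp only [mem_stableSet_iff, circlePt_mem_unitCircle, true_and]
  refine forall₂_congr fun X hX => exists_congr fun x => and_congr_right fun hx =>
    nonneg_iff_nonneg_of_forall_ne_zero (f := fun θ => dotIR x (circlePt θ)) hst
      (by unfold dotIR circlePt; fun_prop) fun ψ hψ h => ?_
  exact disjoint_left.1 hdisj hψ ⟨circlePt_mem_unitCircle ψ, X, hX, x, hx, h⟩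

end criticalDirs

/-- the stable set is a finite union of closed arcs of S¹ with rational
endpoints; in particular it is closed. -/
theorem stmt1 (𝒰 : Finset (Finset Pt)) (hU : UpdateFamily 𝒰) :
    (∃ (k : ℕ) (α β : Fin k → ℝ),
      (∀ i, α i ≤ β i ∧ β i ≤ α i + 2 * Real.pi) ∧
      (∀ i, IsRationalDir (circlePt (α i)) ∧ IsRationalDir (circlePt (β i))) ∧
      stableSet 𝒰 = ⋃ i : Fin k, circlePt '' Set.Icc (α i) (β i)) ∧
    IsClosed (stableSet 𝒰) := by
  refine ⟨?_, isClosed_stableSet 𝒰⟩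
  rcases (stableSet 𝒰).eq_empty_or_nonempty with hS | ⟨u, hu⟩
  · exact ⟨0, Fin.elim0, Fin.elim0, (·.elim0), (·.elim0), by simp [hS]⟩
  obtain ⟨X, hX⟩ := hU.1
  obtain ⟨x, hx, -⟩ := (mem_stableSet_iff.1 hu).2 X hX
  obtain ⟨b₀, hb₀⟩ := exists_circlePt_mem_criticalDirs hX hx (ne_of_mem_of_not_mem hx (hU.2 X hX))
  obtain ⟨k, α, β, hαβ, hcrit, hS⟩ := exists_arcs_of_isClosed (isClosed_stableSet 𝒰)
    (fun _ hu => hu.1) (finite_criticalDirs hU.2) hb₀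
    fun _ _ => circlePt_mem_stableSet_iff_of_disjoint
  exact ⟨k, α, β, hαβ, fun i => ⟨isRationalDir_of_mem_criticalDirs hU.2 (hcrit i).1,
    isRationalDir_of_mem_criticalDirs hU.2 (hcrit i).2⟩, hS⟩
end

section
/- Let 𝒰 be a critical two-dimensional update family and let y ∈ 𝒮(𝒰). Then there exists a finite set 𝒮₄ ⊆ 𝒮(𝒰) with y ∈ 𝒮₄ and 3 ≤ |𝒮₄| ≤ 4, such that the origin 0 lies in the convex hull of 𝒮₄ (viewed as a subset of ℝ²) and every 𝒮₄-droplet is a finite set. -/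
open scoped BigOperators

/- ===== auxiliary machinery for stmt2 ===== -/

namespace Stmt2Aux

/-- counterclockwise rotation by 90 degrees -/
noncomputable def perp (y : ℝ × ℝ) : ℝ × ℝ := (-y.2, y.1)

lemma perp_mem {y : ℝ × ℝ} (hy : y ∈ unitCircle) : perp y ∈ unitCircle := by
  simp only [unitCircle, Set.mem_setOf_eq, perp] at *
  linarith

lemma neg_mem {y : ℝ × ℝ} (hy : y ∈ unitCircle) : -y ∈ unitCircle := by
  simp only [unitCircle, Set.mem_setOf_eq, Prod.fst_neg, Prod.snd_neg] at *
  linarith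

lemma neg_perp_mem {y : ℝ × ℝ} (hy : y ∈ unitCircle) : -perp y ∈ unitCircle :=
  neg_mem (perp_mem hy)

lemma dotIR_sub (x a : Pt) (u : ℝ × ℝ) :
    dotIR (x - a) u = dotIR x u - dotIR a u := by
  simp only [dotIR, Prod.fst_sub, Prod.snd_sub]
  push_cast
  ring

lemma finite_of_bounds (D : Set Pt) (N : ℝ)
    (h : ∀ x ∈ D, |(x.1 : ℝ)| ≤ N ∧ |(x.2 : ℝ)| ≤ N) : D.Finite := by
  apply Set.Finite.subset (Set.finite_Icc ((-⌈N⌉, -⌈N⌉) : Pt) ((⌈N⌉, ⌈N⌉) : Pt))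
  intro x hx
  obtain ⟨h1, h2⟩ := h x hx
  rw [abs_le] at h1 h2
  have hN : N ≤ (⌈N⌉ : ℝ) := Int.le_ceil N
  constructor
  · constructor
    · exact_mod_cast (by linarith [h1.1] : (-(⌈N⌉:ℤ) : ℝ) ≤ (x.1 : ℝ))
    · exact_mod_cast (by linarith [h2.1] : (-(⌈N⌉:ℤ) : ℝ) ≤ (x.2 : ℝ))
  · constructor
    · exact_mod_cast (by linarith [h1.2] : ((x.1 : ℝ)) ≤ ((⌈N⌉:ℤ) : ℝ))
    · exact_mod_cast (by linarith [h2.2] : ((x.2 : ℝ)) ≤ ((⌈N⌉:ℤ) : ℝ))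

-- Main boundedness lemma.
set_option maxHeartbeats 1000000 in
lemma L1 (y a b : ℝ × ℝ) (hy : y ∈ unitCircle)
    (ha : 0 < dotRR a (perp y)) (hb : dotRR b (perp y) < 0)
    (D : Set Pt) (m cy ca cb : ℝ)
    (hD : ∀ x ∈ D, m < dotIR x y ∧ dotIR x y < cy ∧ dotIR x a < ca ∧ dotIR x b < cb) :
    D.Finite := by
  have hyu : y.1 ^ 2 + y.2 ^ 2 = 1 := hy
  set qa := dotRR a (perp y) with hqa
  set qb := dotRR b (perp y) with hqb
  set pa := dotRR a y with hpa
  set pb := dotRR b y with hpb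
  set M := max |m| |cy| with hM
  have hM0 : 0 ≤ M := le_trans (abs_nonneg m) (le_max_left _ _)
  set QU := (ca + |pa| * M) / qa with hQU
  set QL := (cb + |pb| * M) / qb with hQL
  set K := max |QU| |QL| with hK
  have hK0 : 0 ≤ K := le_trans (abs_nonneg QU) (le_max_left _ _)
  apply finite_of_bounds D (M + K)
  intro x hx
  obtain ⟨h1, h2, h3, h4⟩ := hD x hx
  set P := dotIR x y with hP
  set Q := dotIR x (perp y) with hQ
  have hPM : |P| ≤ M := by
    rw [abs_le]
    constructor
    · have := neg_abs_le m
      have := le_max_left |m| |cy|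
      linarith
    · exact le_trans (le_of_lt h2) (le_trans (le_abs_self cy) (le_max_right _ _))
  have idA : dotIR x a = pa * P + qa * Q := by
    simp only [hpa, hqa, hP, hQ, dotIR, dotRR, perp]
    linear_combination (-((x.1 : ℝ) * a.1 + (x.2 : ℝ) * a.2)) * hyu
  have idB : dotIR x b = pb * P + qb * Q := by
    simp only [hpb, hqb, hP, hQ, dotIR, dotRR, perp]
    linear_combination (-((x.1 : ℝ) * b.1 + (x.2 : ℝ) * b.2)) * hyu
  have hpaP : -(pa * P) ≤ |pa| * M := by
    calc -(pa * P) ≤ |pa * P| := neg_le_abs _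
    _ = |pa| * |P| := abs_mul _ _
    _ ≤ |pa| * M := mul_le_mul_of_nonneg_left hPM (abs_nonneg _)
  have hpbP : -(pb * P) ≤ |pb| * M := by
    calc -(pb * P) ≤ |pb * P| := neg_le_abs _
    _ = |pb| * |P| := abs_mul _ _
    _ ≤ |pb| * M := mul_le_mul_of_nonneg_left hPM (abs_nonneg _)
  have hQup : Q ≤ K := by
    have h5 : qa * Q < ca + |pa| * M := by linarith [idA]
    have h6 : Q < QU := by
      rw [hQU, lt_div_iff₀ ha]
      linarith
    exact le_trans h6.le (le_trans (le_abs_self QU) (le_max_left _ _))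
  have hQlo : -K ≤ Q := by
    have h5 : qb * Q < cb + |pb| * M := by linarith [idB]
    have h6 : QL < Q := by
      rw [hQL, div_lt_iff_of_neg hb]
      linarith
    have h7 : -K ≤ QL := by
      have := neg_abs_le QL
      have := le_max_right |QU| |QL|
      linarith
    linarith
  have hQK : |Q| ≤ K := abs_le.2 ⟨hQlo, hQup⟩
  have id1 : (x.1 : ℝ) = P * y.1 - Q * y.2 := by
    simp only [hP, hQ, dotIR, perp]
    linear_combination (-(x.1 : ℝ)) * hyu
  have id2 : (x.2 : ℝ) = P * y.2 + Q * y.1 := by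
    simp only [hP, hQ, dotIR, perp]
    linear_combination (-(x.2 : ℝ)) * hyu
  have hy1 : |y.1| ≤ 1 := abs_le.2 ⟨by nlinarith, by nlinarith⟩
  have hy2 : |y.2| ≤ 1 := abs_le.2 ⟨by nlinarith, by nlinarith⟩
  have e1 : |P * y.1| ≤ M := by
    rw [abs_mul]
    calc |P| * |y.1| ≤ M * 1 := mul_le_mul hPM hy1 (abs_nonneg _) hM0
    _ = M := mul_one M
  have e2 : |P * y.2| ≤ M := by
    rw [abs_mul]
    calc |P| * |y.2| ≤ M * 1 := mul_le_mul hPM hy2 (abs_nonneg _) hM0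
    _ = M := mul_one M
  have e3 : |Q * y.1| ≤ K := by
    rw [abs_mul]
    calc |Q| * |y.1| ≤ K * 1 := mul_le_mul hQK hy1 (abs_nonneg _) hK0
    _ = K := mul_one K
  have e4 : |Q * y.2| ≤ K := by
    rw [abs_mul]
    calc |Q| * |y.2| ≤ K * 1 := mul_le_mul hQK hy2 (abs_nonneg _) hK0
    _ = K := mul_one K
  constructor
  · rw [id1]
    calc |P * y.1 - Q * y.2| ≤ |P * y.1| + |Q * y.2| := abs_sub _ _
    _ ≤ M + K := add_le_add e1 e4
  · rw [id2]
    calc |P * y.2 + Q * y.1| ≤ |P * y.2| + |Q * y.1| := abs_add_le _ _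
    _ ≤ M + K := add_le_add e2 e3

/-- Finiteness in the three-direction case. -/
lemma L3 (y a b : ℝ × ℝ) (hy : y ∈ unitCircle)
    (ha : 0 < dotRR a (perp y)) (hb : dotRR b (perp y) < 0)
    (hC : 0 < dotRR (perp a) b)
    (D : Set Pt) (cy ca cb : ℝ)
    (hD : ∀ x ∈ D, dotIR x y < cy ∧ dotIR x a < ca ∧ dotIR x b < cb) :
    D.Finite := by
  apply L1 y a b hy ha hb D
    ((dotRR b (perp y) * ca - dotRR a (perp y) * cb) / dotRR (perp a) b) cy ca cb
  intro x hx
  obtain ⟨h1, h2, h3⟩ := hD x hx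
  refine ⟨?_, h1, h2, h3⟩
  rw [div_lt_iff₀ hC]
  have id : dotIR x y * dotRR (perp a) b
      = dotRR b (perp y) * dotIR x a - dotRR a (perp y) * dotIR x b := by
    simp only [dotIR, dotRR, perp]
    ring
  have h5 : dotRR b (perp y) * ca < dotRR b (perp y) * dotIR x a :=
    mul_lt_mul_of_neg_left h2 hb
  have h6 : dotRR a (perp y) * dotIR x b < dotRR a (perp y) * cb :=
    mul_lt_mul_of_pos_left h3 ha
  linarith

/-- Finiteness in the four-direction case. -/
lemma L4 (y a b : ℝ × ℝ) (hy : y ∈ unitCircle)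
    (ha : 0 < dotRR a (perp y)) (hb : dotRR b (perp y) < 0)
    (D : Set Pt) (cy cny ca cb : ℝ)
    (hD : ∀ x ∈ D, dotIR x y < cy ∧ dotIR x (-y) < cny ∧ dotIR x a < ca ∧ dotIR x b < cb) :
    D.Finite := by
  apply L1 y a b hy ha hb D (-cny) cy ca cb
  intro x hx
  obtain ⟨h1, h2, h3, h4⟩ := hD x hx
  have id : dotIR x (-y) = -dotIR x y := by
    simp only [dotIR, Prod.fst_neg, Prod.snd_neg]
    ring
  exact ⟨by linarith, h1, h3, h4⟩

lemma stableSet_eq (𝒰 : Finset (Finset Pt)) :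
    stableSet 𝒰 = unitCircle ∩ ⋂ X ∈ 𝒰, ⋃ x ∈ X, {u : ℝ × ℝ | 0 ≤ dotIR x u} := by
  ext u
  simp only [stableSet, Set.mem_setOf_eq, Set.mem_inter_iff, Set.mem_iInter, Set.mem_iUnion,
    Set.mem_setOf_eq]
  refine and_congr_right fun _ => forall₂_congr fun X hX => ?_
  rw [Set.not_subset]
  constructor
  · rintro ⟨x, hx, hx2⟩
    exact ⟨x, by exact_mod_cast hx, not_lt.1 hx2⟩
  · rintro ⟨x, hx, hx2⟩
    exact ⟨x, by exact_mod_cast hx, not_lt.2 hx2⟩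

lemma isClosed_unitCircle : IsClosed unitCircle := by
  have : unitCircle = {u : ℝ × ℝ | u.1 ^ 2 + u.2 ^ 2 = 1} := rfl
  rw [this]
  exact isClosed_eq (by fun_prop) continuous_const

lemma isCompact_stableSet (𝒰 : Finset (Finset Pt)) : IsCompact (stableSet 𝒰) := by
  apply Metric.isCompact_of_isClosed_isBounded
  · rw [stableSet_eq]
    apply IsClosed.inter isClosed_unitCircle
    apply isClosed_biInter
    intro X hX
    apply Set.Finite.isClosed_biUnion (X.finite_toSet)
    intro x hx
    exact isClosed_le continuous_const (by unfold dotIR; fun_prop)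
  · apply Bornology.IsBounded.subset (Metric.isBounded_closedBall (x := (0 : ℝ × ℝ)) (r := 1))
    intro u hu
    have hu1 : u.1 ^ 2 + u.2 ^ 2 = 1 := hu.1
    rw [Metric.mem_closedBall, dist_zero_right, Prod.norm_def]
    apply max_le
    · rw [Real.norm_eq_abs]; exact abs_le.2 ⟨by nlinarith, by nlinarith⟩
    · rw [Real.norm_eq_abs]; exact abs_le.2 ⟨by nlinarith, by nlinarith⟩

lemma hull3 {s : Set (ℝ × ℝ)} {y a b : ℝ × ℝ} (hys : y ∈ s) (has : a ∈ s) (hbs : b ∈ s)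
    (hqa : 0 < dotRR a (perp y)) (hqb : dotRR b (perp y) < 0) (hC : 0 < dotRR (perp a) b) :
    (0 : ℝ × ℝ) ∈ convexHull ℝ s := by
  have h := Finset.centerMass_mem_convexHull (Finset.univ : Finset (Fin 3))
    (w := ![dotRR (perp a) b, -(dotRR b (perp y)), dotRR a (perp y)])
    (z := ![y, a, b]) (s := s) ?_ ?_ ?_
  · have heq : (Finset.univ : Finset (Fin 3)).centerMass
        ![dotRR (perp a) b, -(dotRR b (perp y)), dotRR a (perp y)] ![y, a, b] = 0 := by
      rw [Finset.centerMass]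
      have hsum : (∑ i : Fin 3, (![dotRR (perp a) b, -(dotRR b (perp y)), dotRR a (perp y)] i)
          • (![y, a, b] i)) = (0 : ℝ × ℝ) := by
        simp only [Fin.sum_univ_three, Matrix.cons_val_zero, Matrix.cons_val_one,
          Matrix.head_cons, Matrix.cons_val_two, Matrix.tail_cons]
        apply Prod.ext
        · simp only [Prod.fst_add, Prod.smul_fst, smul_eq_mul, Prod.fst_zero, dotRR, perp]
          ring
        · simp only [Prod.snd_add, Prod.smul_snd, smul_eq_mul, Prod.snd_zero, dotRR, perp]
          ring
      rw [hsum, smul_zero]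
    rwa [heq] at h
  · intro i _
    fin_cases i
    · exact hC.le
    · simpa using hqb.le
    · exact hqa.le
  · rw [Fin.sum_univ_three]
    simp only [Matrix.cons_val_zero, Matrix.cons_val_one, Matrix.head_cons,
      Matrix.cons_val_two, Matrix.tail_cons]
    linarith
  · intro i _
    fin_cases i
    · exact hys
    · exact has
    · exact hbs

lemma hull2 {s : Set (ℝ × ℝ)} {y : ℝ × ℝ} (hys : y ∈ s) (hnys : -y ∈ s) :
    (0 : ℝ × ℝ) ∈ convexHull ℝ s := by
  have h := Finset.centerMass_mem_convexHull (Finset.univ : Finset (Fin 2))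
    (w := ![(1 : ℝ), 1]) (z := ![y, -y]) (s := s) ?_ ?_ ?_
  · have heq : (Finset.univ : Finset (Fin 2)).centerMass ![(1 : ℝ), 1] ![y, -y] = 0 := by
      rw [Finset.centerMass]
      have hsum : (∑ i : Fin 2, (![(1:ℝ), 1] i) • (![y, -y] i)) = (0 : ℝ × ℝ) := by
        simp [Fin.sum_univ_two]
      rw [hsum, smul_zero]
    rwa [heq] at h
  · intro i _
    fin_cases i <;> norm_num
  · rw [Fin.sum_univ_two]; norm_num
  · intro i _
    fin_cases i
    · exact hys
    · exact hnys

end Stmt2Aux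

namespace Stmt2Aux

lemma dotRR_comm (u v : ℝ × ℝ) : dotRR u v = dotRR v u := by unfold dotRR; ring

lemma self_perp (y : ℝ × ℝ) : dotRR y (perp y) = 0 := by unfold dotRR perp; ring

lemma neg_self_perp (y : ℝ × ℝ) : dotRR (-y) (perp y) = 0 := by
  unfold dotRR perp
  simp only [Prod.fst_neg, Prod.snd_neg]
  ring

lemma unit_decomp {y v : ℝ × ℝ} (hy : y ∈ unitCircle) (hv : v ∈ unitCircle) :
    dotRR v y ^ 2 + dotRR v (perp y) ^ 2 = 1 := by
  have h1 : y.1 ^ 2 + y.2 ^ 2 = 1 := hy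
  have h2 : v.1 ^ 2 + v.2 ^ 2 = 1 := hv
  have : dotRR v y ^ 2 + dotRR v (perp y) ^ 2 = (v.1 ^ 2 + v.2 ^ 2) * (y.1 ^ 2 + y.2 ^ 2) := by
    unfold dotRR perp; ring
  rw [this, h1, h2, mul_one]

end Stmt2Aux

namespace Stmt2Aux

lemma key_ineq (pa qa pb qb : ℝ) (hqa : 0 < qa) (hqb : 0 ≤ qb) (hpba : pa ≤ pb)
    (hua : pa ^ 2 + qa ^ 2 = 1) (hub : pb ^ 2 + qb ^ 2 = 1)
    (hC2 : 0 < pa * qb - qa * pb) : False := by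
  rcases le_or_gt 0 pb with hpb0 | hpb0
  · have h1 : 0 ≤ qa * pb := mul_nonneg hqa.le hpb0
    have h2 : 0 < pa * qb := by nlinarith
    have hqbpos : 0 < qb := by
      rcases hqb.lt_or_eq with hq | hq
      · exact hq
      · exfalso; rw [← hq] at h2; nlinarith
    have hpapos : 0 < pa := by nlinarith
    have e1 : (qa * pb) ^ 2 < (pa * qb) ^ 2 := by nlinarith
    have e2 : pa ^ 2 ≤ pb ^ 2 := by nlinarith
    nlinarith
  · have hpaneg : pa < 0 := lt_of_le_of_lt hpba hpb0
    have e0 : pb ^ 2 ≤ pa ^ 2 := by nlinarith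
    have e1 : (qa * pb) ^ 2 ≤ (pa * qb) ^ 2 := by nlinarith
    have e2 : pa * qb ≤ 0 := mul_nonpos_of_nonpos_of_nonneg hpaneg.le hqb
    have e3 : qa * pb < 0 := mul_neg_of_pos_of_neg hqa hpb0
    have hsum : pa * qb + qa * pb < 0 := by linarith
    nlinarith [mul_neg_of_pos_of_neg hC2 hsum]

end Stmt2Aux

/-- for a critical family and y ∈ 𝒮(𝒰) there is a set 𝒮₄ ⊆ 𝒮(𝒰) of 3 or 4
stable directions containing y, with 0 in its convex hull, all of whose droplets are finite. -/
theorem stmt2 (𝒰 : Finset (Finset Pt)) (hU : UpdateFamily 𝒰) (hcrit : Critical 𝒰)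
    (y : ℝ × ℝ) (hy : y ∈ stableSet 𝒰) :
    ∃ 𝒮₄ : Finset (ℝ × ℝ), (𝒮₄ : Set (ℝ × ℝ)) ⊆ stableSet 𝒰 ∧ y ∈ 𝒮₄ ∧
      3 ≤ 𝒮₄.card ∧ 𝒮₄.card ≤ 4 ∧
      (0 : ℝ × ℝ) ∈ convexHull ℝ (𝒮₄ : Set (ℝ × ℝ)) ∧
      ∀ D : Set Pt, IsDroplet 𝒮₄ D → D.Finite := by
  classical
  open Stmt2Aux in
  have hyC : y ∈ unitCircle := hy.1
  have hy' : y.1 ^ 2 + y.2 ^ 2 = 1 := hyC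
  by_cases hny : -y ∈ stableSet 𝒰
  · -- four-point case: {y, -y, a, b}
    obtain ⟨a, haS, haq⟩ := hcrit.2 (Stmt2Aux.perp y) (Stmt2Aux.perp_mem hyC)
    obtain ⟨b, hbS, hbq⟩ := hcrit.2 (-Stmt2Aux.perp y) (Stmt2Aux.neg_perp_mem hyC)
    have hqa : 0 < dotRR a (Stmt2Aux.perp y) := by
      rw [Stmt2Aux.dotRR_comm]; exact haq
    have hqb : dotRR b (Stmt2Aux.perp y) < 0 := by
      have h1 : dotRR (-Stmt2Aux.perp y) b = -dotRR b (Stmt2Aux.perp y) := by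
        unfold dotRR
        simp only [Prod.fst_neg, Prod.snd_neg]
        ring
      have h2 : (0:ℝ) < dotRR (-Stmt2Aux.perp y) b := hbq
      linarith [h1 ▸ h2]
    have hyny : y ≠ -y := by
      intro h
      have h1 := congrArg Prod.fst h
      have h2 := congrArg Prod.snd h
      simp only [Prod.fst_neg, Prod.snd_neg] at h1 h2
      have e1 : y.1 = 0 := by linarith
      have e2 : y.2 = 0 := by linarith
      rw [e1, e2] at hy'; norm_num at hy'
    have hay : a ≠ y := by
      intro h; rw [h, Stmt2Aux.self_perp] at hqa; exact lt_irrefl _ hqa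
    have hany : a ≠ -y := by
      intro h; rw [h, Stmt2Aux.neg_self_perp] at hqa; exact lt_irrefl _ hqa
    have hby : b ≠ y := by
      intro h; rw [h, Stmt2Aux.self_perp] at hqb; exact lt_irrefl _ hqb
    have hbny : b ≠ -y := by
      intro h; rw [h, Stmt2Aux.neg_self_perp] at hqb; exact lt_irrefl _ hqb
    have hab : a ≠ b := by
      intro h; rw [h] at hqa; exact lt_irrefl _ (hqa.trans hqb)
    refine ⟨{y, -y, a, b}, ?_, by simp, ?_, ?_, ?_, ?_⟩
    · intro u hu
      simp only [Finset.coe_insert, Set.mem_insert_iff, Finset.coe_singleton,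
        Set.mem_singleton_iff] at hu
      rcases hu with rfl | rfl | rfl | rfl
      exacts [hy, hny, haS, hbS]
    · have n1 : a ∉ ({b} : Finset (ℝ × ℝ)) := by simpa using hab
      have n2 : -y ∉ ({a, b} : Finset (ℝ × ℝ)) := by
        simp only [Finset.mem_insert, Finset.mem_singleton]
        push_neg
        exact ⟨fun h => hany h.symm, fun h => hbny h.symm⟩
      have n3 : y ∉ ({-y, a, b} : Finset (ℝ × ℝ)) := by
        simp only [Finset.mem_insert, Finset.mem_singleton]
        push_neg
        exact ⟨hyny, fun h => hay h.symm, fun h => hby h.symm⟩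
      rw [Finset.card_insert_of_notMem n3, Finset.card_insert_of_notMem n2,
        Finset.card_insert_of_notMem n1, Finset.card_singleton]
      norm_num
    · have n1 : a ∉ ({b} : Finset (ℝ × ℝ)) := by simpa using hab
      have n2 : -y ∉ ({a, b} : Finset (ℝ × ℝ)) := by
        simp only [Finset.mem_insert, Finset.mem_singleton]
        push_neg
        exact ⟨fun h => hany h.symm, fun h => hbny h.symm⟩
      have n3 : y ∉ ({-y, a, b} : Finset (ℝ × ℝ)) := by
        simp only [Finset.mem_insert, Finset.mem_singleton]
        push_neg
        exact ⟨hyny, fun h => hay h.symm, fun h => hby h.symm⟩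
      rw [Finset.card_insert_of_notMem n3, Finset.card_insert_of_notMem n2,
        Finset.card_insert_of_notMem n1, Finset.card_singleton]
    · exact Stmt2Aux.hull2
        (show y ∈ (↑({y, -y, a, b} : Finset (ℝ × ℝ)) : Set (ℝ × ℝ)) by simp)
        (show -y ∈ (↑({y, -y, a, b} : Finset (ℝ × ℝ)) : Set (ℝ × ℝ)) by simp)
    · intro D hD
      obtain ⟨hne, f, hfEq⟩ := hD
      have key : ∀ u ∈ ({y, -y, a, b} : Finset (ℝ × ℝ)), ∀ x ∈ D,
          dotIR x u < dotIR (f u) u := by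
        intro u hu x hx
        rw [hfEq] at hx
        have hmem : x ∈ translHalfPlane u (f u) := Set.mem_iInter₂.1 hx u hu
        have h2 : dotIR (x - f u) u < 0 := hmem
        rw [Stmt2Aux.dotIR_sub] at h2
        linarith
      apply Stmt2Aux.L4 y a b hyC hqa hqb D (dotIR (f y) y) (dotIR (f (-y)) (-y))
        (dotIR (f a) a) (dotIR (f b) b)
      intro x hx
      exact ⟨key y (by simp) x hx, key (-y) (by simp) x hx, key a (by simp) x hx,
        key b (by simp) x hx⟩
  · -- three-point case: {y, a, b}
    set A := stableSet 𝒰 ∩ {v : ℝ × ℝ | 0 ≤ dotRR v (Stmt2Aux.perp y)} with hAdef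
    have hAc : IsCompact A := by
      apply (Stmt2Aux.isCompact_stableSet 𝒰).inter_right
      exact isClosed_le continuous_const (by unfold dotRR; fun_prop)
    have hyA : y ∈ A := ⟨hy, le_of_eq (Stmt2Aux.self_perp y).symm⟩
    have hcont : ContinuousOn (fun v : ℝ × ℝ => dotRR v y) A :=
      Continuous.continuousOn (by unfold dotRR; fun_prop)
    obtain ⟨a, haA, hamin⟩ := hAc.exists_isMinOn ⟨y, hyA⟩ hcont
    have hmin : ∀ v ∈ A, dotRR a y ≤ dotRR v y := fun v hv => hamin hv
    have haS : a ∈ stableSet 𝒰 := haA.1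
    have haC : a ∈ unitCircle := haS.1
    have ha' : a.1 ^ 2 + a.2 ^ 2 = 1 := haC
    have hqa0 : 0 ≤ dotRR a (Stmt2Aux.perp y) := haA.2
    -- a is not y and not -y, and strictly above the line
    obtain ⟨s0, hs0S, hs0q⟩ := hcrit.2 (Stmt2Aux.perp y) (Stmt2Aux.perp_mem hyC)
    have hs0q' : 0 < dotRR s0 (Stmt2Aux.perp y) := by rw [Stmt2Aux.dotRR_comm]; exact hs0q
    have hs0A : s0 ∈ A := ⟨hs0S, hs0q'.le⟩
    have hs0ny : s0 ≠ y := by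
      intro h; rw [h, Stmt2Aux.self_perp] at hs0q'; exact lt_irrefl _ hs0q'
    have hs0' : s0.1 ^ 2 + s0.2 ^ 2 = 1 := hs0S.1
    have hs0lt1 : dotRR s0 y < 1 := by
      have hne : 0 < (s0.1 - y.1) ^ 2 + (s0.2 - y.2) ^ 2 := by
        by_contra h
        push_neg at h
        have e1 : s0.1 = y.1 := by nlinarith [sq_nonneg (s0.1 - y.1), sq_nonneg (s0.2 - y.2)]
        have e2 : s0.2 = y.2 := by nlinarith [sq_nonneg (s0.1 - y.1), sq_nonneg (s0.2 - y.2)]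
        exact hs0ny (Prod.ext e1 e2)
      unfold dotRR
      nlinarith
    have hpa1 : dotRR a y < 1 := lt_of_le_of_lt (hmin s0 hs0A) hs0lt1
    have hqa : 0 < dotRR a (Stmt2Aux.perp y) := by
      rcases hqa0.lt_or_eq with h | h
      · exact h
      · exfalso
        have hdec := Stmt2Aux.unit_decomp hyC haC
        rw [← h] at hdec
        have hpam1 : dotRR a y = -1 := by nlinarith
        have idd1 : a.1 = dotRR a y * y.1 - dotRR a (Stmt2Aux.perp y) * y.2 := by
          unfold dotRR Stmt2Aux.perp
          linear_combination (-a.1) * hy'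
        have idd2 : a.2 = dotRR a y * y.2 + dotRR a (Stmt2Aux.perp y) * y.1 := by
          unfold dotRR Stmt2Aux.perp
          linear_combination (-a.2) * hy'
        have e : a = -y := by
          apply Prod.ext
          · rw [Prod.fst_neg, idd1, hpam1, ← h]; ring
          · rw [Prod.snd_neg, idd2, hpam1, ← h]; ring
        exact hny (e ▸ haS)
    obtain ⟨b, hbS, hbq⟩ := hcrit.2 (Stmt2Aux.perp a) (Stmt2Aux.perp_mem haC)
    have hC : 0 < dotRR (Stmt2Aux.perp a) b := hbq
    have hb' : b.1 ^ 2 + b.2 ^ 2 = 1 := hbS.1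
    have hqb : dotRR b (Stmt2Aux.perp y) < 0 := by
      by_contra h
      push_neg at h
      have hbA : b ∈ A := ⟨hbS, h⟩
      have hpba : dotRR a y ≤ dotRR b y := hmin b hbA
      have hua := Stmt2Aux.unit_decomp hyC haC
      have hub := Stmt2Aux.unit_decomp hyC hbS.1
      have hCidd : dotRR (Stmt2Aux.perp a) b
          = dotRR a y * dotRR b (Stmt2Aux.perp y)
            - dotRR a (Stmt2Aux.perp y) * dotRR b y := by
        unfold dotRR Stmt2Aux.perp
        linear_combination (a.2 * b.1 - a.1 * b.2) * hy'
      set pa := dotRR a y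
      set qa := dotRR a (Stmt2Aux.perp y)
      set pb := dotRR b y
      set qb := dotRR b (Stmt2Aux.perp y)
      have hC2 : 0 < pa * qb - qa * pb := by rw [← hCidd]; exact hC
      exact Stmt2Aux.key_ineq pa qa pb qb hqa h hpba hua hub hC2
    have hay : a ≠ y := by
      intro h; rw [h, Stmt2Aux.self_perp] at hqa; exact lt_irrefl _ hqa
    have hby : b ≠ y := by
      intro h; rw [h, Stmt2Aux.self_perp] at hqb; exact lt_irrefl _ hqb
    have hab : a ≠ b := by
      intro h; rw [h] at hqa; exact lt_irrefl _ (hqa.trans hqb)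
    refine ⟨{y, a, b}, ?_, by simp, ?_, ?_, ?_, ?_⟩
    · intro u hu
      simp only [Finset.coe_insert, Set.mem_insert_iff, Finset.coe_singleton,
        Set.mem_singleton_iff] at hu
      rcases hu with rfl | rfl | rfl
      exacts [hy, haS, hbS]
    · have n1 : a ∉ ({b} : Finset (ℝ × ℝ)) := by simpa using hab
      have n2 : y ∉ ({a, b} : Finset (ℝ × ℝ)) := by
        simp only [Finset.mem_insert, Finset.mem_singleton]
        push_neg
        exact ⟨fun h => hay h.symm, fun h => hby h.symm⟩
      rw [Finset.card_insert_of_notMem n2, Finset.card_insert_of_notMem n1,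
        Finset.card_singleton]
    · have n1 : a ∉ ({b} : Finset (ℝ × ℝ)) := by simpa using hab
      have n2 : y ∉ ({a, b} : Finset (ℝ × ℝ)) := by
        simp only [Finset.mem_insert, Finset.mem_singleton]
        push_neg
        exact ⟨fun h => hay h.symm, fun h => hby h.symm⟩
      rw [Finset.card_insert_of_notMem n2, Finset.card_insert_of_notMem n1,
        Finset.card_singleton]
      norm_num
    · exact Stmt2Aux.hull3
        (show y ∈ (↑({y, a, b} : Finset (ℝ × ℝ)) : Set (ℝ × ℝ)) by simp)
        (show a ∈ (↑({y, a, b} : Finset (ℝ × ℝ)) : Set (ℝ × ℝ)) by simp)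
        (show b ∈ (↑({y, a, b} : Finset (ℝ × ℝ)) : Set (ℝ × ℝ)) by simp)
        hqa hqb hC
    · intro D hD
      obtain ⟨hne, f, hfEq⟩ := hD
      have key : ∀ u ∈ ({y, a, b} : Finset (ℝ × ℝ)), ∀ x ∈ D,
          dotIR x u < dotIR (f u) u := by
        intro u hu x hx
        rw [hfEq] at hx
        have hmem : x ∈ translHalfPlane u (f u) := Set.mem_iInter₂.1 hx u hu
        have h2 : dotIR (x - f u) u < 0 := hmem
        rw [Stmt2Aux.dotIR_sub] at h2
        linarith
      apply Stmt2Aux.L3 y a b hyC hqa hqb hC D (dotIR (f y) y) (dotIR (f a) a) (dotIR (f b) b)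
      intro x hx
      exact ⟨key y (by simp) x hx, key a (by simp) x hx, key b (by simp) x hx⟩
end

section
/- Let 𝒰 be an update family and let 𝒯 ⊆ 𝒮(𝒰) be a finite set such that 0 lies in the interior of the convex hull of 𝒯 (so that every bounded subset of ℤ² is contained in a finite 𝒯-droplet). If κ is chosen sufficiently large (depending on 𝒰 and 𝒯), then for every finite set A ⊆ ℤ², every execution of the covering algorithm terminates, and the 𝒰-bootstrap closure [A] is contained in the union of the droplets of the terminal collection of any execution. -/
open scoped BigOperators

noncomputable section AuxStmt3

private lemma dotIR_add' (x y : Pt) (u : ℝ × ℝ) :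
    dotIR (x + y) u = dotIR x u + dotIR y u := by
  simp only [dotIR, Prod.fst_add, Prod.snd_add]
  push_cast; ring

private lemma edist2_eq_cdist (x y : Pt) :
    edist2 x y = dist (⟨(x.1 : ℝ), (x.2 : ℝ)⟩ : ℂ) (⟨(y.1 : ℝ), (y.2 : ℝ)⟩ : ℂ) := by
  rw [Complex.dist_eq, Complex.norm_def, Complex.normSq_apply]
  simp only [edist2, Complex.sub_re, Complex.sub_im]
  congr 1; ring

private lemma edist2_triangle (x y z : Pt) :
    edist2 x z ≤ edist2 x y + edist2 y z := by
  rw [edist2_eq_cdist, edist2_eq_cdist, edist2_eq_cdist]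
  exact dist_triangle _ _ _

private lemma edist2_add_right (x v : Pt) :
    edist2 (x + v) x = Real.sqrt ((v.1 : ℝ) ^ 2 + (v.2 : ℝ) ^ 2) := by
  simp only [edist2, Prod.fst_add, Prod.snd_add]
  congr 1; push_cast; ring

private lemma edist2_comm' (x y : Pt) : edist2 x y = edist2 y x := by
  simp only [edist2]; congr 1; ring

private lemma sqrt_le_natAbs (v : Pt) :
    Real.sqrt ((v.1 : ℝ) ^ 2 + (v.2 : ℝ) ^ 2) ≤ ((v.1.natAbs + v.2.natAbs : ℕ) : ℝ) := by
  have h1 : ((v.1.natAbs + v.2.natAbs : ℕ) : ℝ) = |(v.1 : ℝ)| + |(v.2 : ℝ)| := by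
    push_cast [Nat.cast_natAbs]; ring
  rw [h1]
  have h2 : (v.1 : ℝ) ^ 2 + (v.2 : ℝ) ^ 2 ≤ (|(v.1 : ℝ)| + |(v.2 : ℝ)|) ^ 2 := by
    have := abs_nonneg (v.1 : ℝ)
    have := abs_nonneg (v.2 : ℝ)
    have := sq_abs (v.1 : ℝ)
    have := sq_abs (v.2 : ℝ)
    nlinarith [mul_nonneg (abs_nonneg (v.1 : ℝ)) (abs_nonneg (v.2 : ℝ))]
  calc Real.sqrt ((v.1 : ℝ) ^ 2 + (v.2 : ℝ) ^ 2)
      ≤ Real.sqrt ((|(v.1 : ℝ)| + |(v.2 : ℝ)|) ^ 2) := Real.sqrt_le_sqrt h2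
    _ = |(v.1 : ℝ)| + |(v.2 : ℝ)| := Real.sqrt_sq (by positivity)

private lemma translate_droplet (𝒯 : Finset (ℝ × ℝ)) (D : Set Pt) (a : Pt)
    (h : IsDroplet 𝒯 D) : IsDroplet 𝒯 (translatePt a D) := by
  obtain ⟨hne, b, hb⟩ := h
  refine ⟨hne.image _, fun u => a + b u, ?_⟩
  ext x
  simp only [translatePt, Set.mem_image, Set.mem_iInter]
  constructor
  · rintro ⟨z, hz, rfl⟩ u hu
    rw [hb] at hz
    simp only [Set.mem_iInter] at hz
    have := hz u hu
    simpa only [translHalfPlane, Set.mem_setOf_eq, add_sub_add_comm, sub_self, zero_add,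
      show a + z - (a + b u) = z - b u by abel] using this
  · intro hx
    refine ⟨x - a, ?_, by abel⟩
    rw [hb]
    simp only [Set.mem_iInter]
    intro u hu
    have := hx u hu
    simpa only [translHalfPlane, Set.mem_setOf_eq,
      show x - a - b u = x - (a + b u) by abel] using this

private lemma droplet_stable (𝒰 : Finset (Finset Pt)) (𝒯 : Finset (ℝ × ℝ))
    (h𝒯 : (𝒯 : Set (ℝ × ℝ)) ⊆ stableSet 𝒰) (D : Set Pt) (hD : IsDroplet 𝒯 D)
    (x : Pt) (X : Finset Pt) (hX : X ∈ 𝒰) (hall : ∀ v ∈ X, x + v ∈ D) : x ∈ D := by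
  obtain ⟨-, a, ha⟩ := hD
  rw [ha]
  simp only [Set.mem_iInter]
  intro u hu
  have hu' : u ∈ stableSet 𝒰 := h𝒯 (by exact_mod_cast hu)
  have hns : ¬ ((X : Set Pt) ⊆ halfPlane u) := hu'.2 X hX
  rw [Set.not_subset] at hns
  obtain ⟨v, hvX, hv⟩ := hns
  simp only [halfPlane, Set.mem_setOf_eq, not_lt] at hv
  have hvD := hall v (by exact_mod_cast hvX)
  rw [ha] at hvD
  simp only [Set.mem_iInter] at hvD
  have h1 := hvD u hu
  simp only [translHalfPlane, Set.mem_setOf_eq] at h1 ⊢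
  have h2 : x + v - a u = (x - a u) + v := by abel
  rw [h2, dotIR_add'] at h1
  linarith

end AuxStmt3
/-- for κ sufficiently large, every execution of the covering algorithm
terminates, and the bootstrap closure of A is contained in the union of the droplets of
the terminal collection of any execution. -/
theorem stmt3 (𝒰 : Finset (Finset Pt)) (hU : UpdateFamily 𝒰)
    (𝒯 : Finset (ℝ × ℝ)) (h𝒯 : (𝒯 : Set (ℝ × ℝ)) ⊆ stableSet 𝒰)
    (h0 : (0 : ℝ × ℝ) ∈ interior (convexHull ℝ (𝒯 : Set (ℝ × ℝ)))) :
    ∃ κ₀ : ℝ, ∀ κ : ℝ, κ₀ ≤ κ → ∀ Dhat : Set Pt, GoodBase κ 𝒯 Dhat →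
      ∀ A : Finset Pt,
        (¬ ∃ f : ℕ → Multiset (Set Pt), f 0 = initColl Dhat A ∧
            ∀ n : ℕ, MergeStep κ 𝒯 (f n) (f (n + 1))) ∧
        ∀ C : Multiset (Set Pt), Reachable κ 𝒯 Dhat A C → TerminalColl κ C →
          bootClosure 𝒰 (A : Set Pt) ⊆ ⋃₀ {D : Set Pt | D ∈ C} := by
  classical
  -- 𝒯 is nonempty
  have h𝒯ne : 𝒯.Nonempty := by
    rcases Finset.eq_empty_or_nonempty 𝒯 with h | h
    · exfalso
      rw [h] at h0
      simpa using h0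
    · exact h
  obtain ⟨u₀, hu₀⟩ := h𝒯ne
  -- bound on rule point norms
  set Vset : Finset Pt := 𝒰.sup id with hVset
  set R : ℝ := ((Vset.sup (fun v : Pt => v.1.natAbs + v.2.natAbs) : ℕ) : ℝ) with hR
  have hRbound : ∀ v ∈ Vset, Real.sqrt ((v.1 : ℝ) ^ 2 + (v.2 : ℝ) ^ 2) ≤ R := by
    intro v hv
    refine (sqrt_le_natAbs v).trans ?_
    exact_mod_cast Nat.cast_le.2 (Finset.le_sup (f := fun v : Pt => v.1.natAbs + v.2.natAbs) hv)
  have hmemV : ∀ X ∈ 𝒰, ∀ v ∈ X, v ∈ Vset := by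
    intro X hX v hv
    exact Finset.le_sup (f := id) hX hv
  refine ⟨2 * R + 1, fun κ hκ Dhat hDhat A => ⟨?_, ?_⟩⟩
  · -- termination
    rintro ⟨f, hf0, hfs⟩
    have hcard : ∀ n, Multiset.card (f (n + 1)) + 1 = Multiset.card (f n) := by
      intro n
      obtain ⟨D₁, D₂, D₃, C₀, h1, _, _, h4⟩ := hfs n
      rw [h1, h4]
      simp
    have hall : ∀ n, Multiset.card (f n) + n = Multiset.card (f 0) := by
      intro n
      induction n with
      | zero => simp
      | succ k ih =>
        have := hcard k
        omega
    have := hall (Multiset.card (f 0) + 1)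
    omega
  · -- closure containment
    intro C hreach hterm
    -- invariants along the execution
    have keygen : ∀ C' : Multiset (Set Pt), Reachable κ 𝒯 Dhat A C' →
        (∀ D ∈ C', IsDroplet 𝒯 D) ∧ (A : Set Pt) ⊆ ⋃₀ {D : Set Pt | D ∈ C'} := by
      intro C' hreach'
      induction hreach' with
      | refl =>
        constructor
        · intro D hD
          rw [initColl, Multiset.mem_map] at hD
          obtain ⟨a, _, rfl⟩ := hD
          exact translate_droplet 𝒯 Dhat a hDhat.1
        · intro a ha
          refine ⟨translatePt a Dhat, ?_, ?_⟩
          · rw [Set.mem_setOf_eq, initColl, Multiset.mem_map]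
            exact ⟨a, by exact_mod_cast ha, rfl⟩
          · exact ⟨0, hDhat.2.2.1, by simp⟩
      | tail h1 h2 ih =>
        obtain ⟨D₁, D₂, D₃, C₀, hb, hclose, hsm, hc⟩ := h2
        constructor
        · intro D hD
          rw [hc, Multiset.mem_cons] at hD
          rcases hD with rfl | hD
          · exact hsm.1
          · exact ih.1 D (by rw [hb]; simp [Multiset.mem_cons, hD])
        · intro x hx
          obtain ⟨E, hEC, hxE⟩ := ih.2 hx
          rw [Set.mem_setOf_eq, hb, Multiset.mem_cons, Multiset.mem_cons] at hEC
          rcases hEC with rfl | rfl | hEC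
          · exact ⟨D₃, by rw [Set.mem_setOf_eq, hc]; simp, hsm.2.1 (Or.inl hxE)⟩
          · exact ⟨D₃, by rw [Set.mem_setOf_eq, hc]; simp, hsm.2.1 (Or.inr hxE)⟩
          · exact ⟨E, by rw [Set.mem_setOf_eq, hc]; simp [Multiset.mem_cons, hEC], hxE⟩
    have key := keygen C hreach
    set U : Set Pt := ⋃₀ {D : Set Pt | D ∈ C} with hUdef
    -- U is closed under one bootstrap step
    have hstep : bootStep 𝒰 U ⊆ U := by
      intro x hx
      rcases hx with hx | hx
      · exact hx
      · obtain ⟨X, hX, hallX⟩ := hx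
        -- X is nonempty
        have hst : u₀ ∈ stableSet 𝒰 := h𝒯 (by exact_mod_cast hu₀)
        have hns : ¬ ((X : Set Pt) ⊆ halfPlane u₀) := hst.2 X hX
        rw [Set.not_subset] at hns
        obtain ⟨v₀, hv₀X, -⟩ := hns
        have hv₀X' : v₀ ∈ X := by exact_mod_cast hv₀X
        obtain ⟨D, hDC, hxD⟩ := hallX v₀ hv₀X'
        rw [Set.mem_setOf_eq] at hDC
        -- all of x + X lies in D
        have hXD : ∀ w ∈ X, x + w ∈ D := by
          intro w hw
          obtain ⟨E, hEC, hxE⟩ := hallX w hw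
          rw [Set.mem_setOf_eq] at hEC
          by_cases hED : E = D
          · rw [hED] at hxE; exact hxE
          · exfalso
            have hE' : E ∈ C.erase D := (Multiset.mem_erase_of_ne hED).2 hEC
            obtain ⟨C₁, hC₁⟩ : ∃ C₁, C.erase D = E ::ₘ C₁ :=
              ⟨(C.erase D).erase E, (Multiset.cons_erase hE').symm⟩
            have hCdec : C = D ::ₘ E ::ₘ C₁ := by
              rw [← hC₁, Multiset.cons_erase hDC]
            refine hterm D E C₁ hCdec ⟨x + v₀, hxD, x + w, hxE, ?_⟩
            have hb1 : edist2 (x + v₀) x ≤ R := by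
              rw [edist2_add_right]
              exact hRbound v₀ (hmemV X hX v₀ hv₀X')
            have hb2 : edist2 x (x + w) ≤ R := by
              rw [edist2_comm', edist2_add_right]
              exact hRbound w (hmemV X hX w hw)
            have := edist2_triangle (x + v₀) x (x + w)
            linarith
        exact ⟨D, hDC, droplet_stable 𝒰 𝒯 h𝒯 D (key.1 D hDC) x X hX hXD⟩
    -- conclude by induction over bootstrap iterates
    have hiter : ∀ n, bootIter 𝒰 n (A : Set Pt) ⊆ U := by
      intro n
      induction n with
      | zero => exact key.2
      | succ k ih =>
        intro x hx
        apply hstep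
        rcases hx with hx | hx
        · exact Or.inl (ih hx)
        · obtain ⟨X, hX, hv⟩ := hx
          exact Or.inr ⟨X, hX, fun v hvX => ih (hv v hvX)⟩
    intro x hx
    obtain ⟨_, ⟨n, rfl⟩, hn⟩ := hx
    exact hiter n hn
end

section
/- (Extremal lemma.) Let 𝒰 be an update family and 𝒯 ⊆ S¹ finite with 0 in the interior of the convex hull of 𝒯. If κ is sufficiently large (depending on 𝒰 and 𝒯), then there exists a constant ε > 0 (depending on 𝒰, 𝒯 and κ) such that for every finite set A ⊆ ℤ² and every droplet D covered by A, one has |D ∩ A| ≥ ε · diam(D). -/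
open scoped BigOperators

namespace S5
noncomputable def nrm (z : ℝ × ℝ) : ℝ := Real.sqrt (z.1 ^ 2 + z.2 ^ 2)

lemma edist2_eq (x y : Pt) : edist2 x y = nrm ((x.1 : ℝ) - (y.1 : ℝ), (x.2 : ℝ) - (y.2 : ℝ)) := rfl

lemma dotIR_sub (x a : Pt) (u : ℝ × ℝ) : dotIR (x - a) u = dotIR x u - dotIR a u := by
  simp only [dotIR, Prod.fst_sub, Prod.snd_sub]; push_cast; ring

lemma dotIR_add (x a : Pt) (u : ℝ × ℝ) : dotIR (a + x) u = dotIR a u + dotIR x u := by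
  simp only [dotIR, Prod.fst_add, Prod.snd_add]; push_cast; ring

lemma dotRR_sub_dotIR (x y : Pt) (u : ℝ × ℝ) :
    dotRR ((x.1 : ℝ) - (y.1 : ℝ), (x.2 : ℝ) - (y.2 : ℝ)) u = dotIR x u - dotIR y u := by
  simp only [dotRR, dotIR]; ring

lemma dotRR_le_nrm (z u : ℝ × ℝ) (hu : u ∈ unitCircle) : dotRR z u ≤ nrm z := by
  have hu' : u.1 ^ 2 + u.2 ^ 2 = 1 := hu
  have h1 : nrm z ^ 2 = z.1 ^ 2 + z.2 ^ 2 := Real.sq_sqrt (by positivity)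
  have h2 : 0 ≤ nrm z := Real.sqrt_nonneg _
  simp only [dotRR]
  nlinarith [sq_nonneg (z.1 * u.2 - z.2 * u.1), sq_nonneg (nrm z + (z.1 * u.1 + z.2 * u.2)),
    sq_nonneg (nrm z - (z.1 * u.1 + z.2 * u.2))]

lemma exists_cut (u : ℝ × ℝ) (hu : u ∈ unitCircle) (s : ℝ) :
    ∃ a : Pt, s < dotIR a u ∧ dotIR a u ≤ s + 3 := by
  have hu' : u.1 ^ 2 + u.2 ^ 2 = 1 := hu
  refine ⟨(round ((s + 2) * u.1), round ((s + 2) * u.2)), ?_, ?_⟩ <;>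
  · have e1 : |((round ((s + 2) * u.1) : ℤ) : ℝ) - (s + 2) * u.1| ≤ 1 / 2 := by
      rw [abs_sub_comm]; exact abs_sub_round _
    have e2 : |((round ((s + 2) * u.2) : ℤ) : ℝ) - (s + 2) * u.2| ≤ 1 / 2 := by
      rw [abs_sub_comm]; exact abs_sub_round _
    have hu1 : |u.1| ≤ 1 := by nlinarith [sq_nonneg u.2, abs_nonneg u.1, sq_abs u.1]
    have hu2 : |u.2| ≤ 1 := by nlinarith [sq_nonneg u.1, abs_nonneg u.2, sq_abs u.2]
    have m1 : |(((round ((s + 2) * u.1) : ℤ) : ℝ) - (s + 2) * u.1) * u.1| ≤ 1 / 2 := by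
      rw [abs_mul]
      calc |((round ((s + 2) * u.1) : ℤ) : ℝ) - (s + 2) * u.1| * |u.1| ≤ (1/2) * 1 :=
            mul_le_mul e1 hu1 (abs_nonneg _) (by norm_num)
        _ = 1/2 := by norm_num
    have m2 : |(((round ((s + 2) * u.2) : ℤ) : ℝ) - (s + 2) * u.2) * u.2| ≤ 1 / 2 := by
      rw [abs_mul]
      calc |((round ((s + 2) * u.2) : ℤ) : ℝ) - (s + 2) * u.2| * |u.2| ≤ (1/2) * 1 :=
            mul_le_mul e2 hu2 (abs_nonneg _) (by norm_num)
        _ = 1/2 := by norm_num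
    have key : dotIR (round ((s + 2) * u.1), round ((s + 2) * u.2)) u
        = (s + 2) * (u.1 ^ 2 + u.2 ^ 2)
          + (((round ((s + 2) * u.1) : ℤ) : ℝ) - (s + 2) * u.1) * u.1
          + (((round ((s + 2) * u.2) : ℤ) : ℝ) - (s + 2) * u.2) * u.2 := by
      simp only [dotIR]; ring
    rw [key, hu']
    have a1 := abs_le.mp m1
    have a2 := abs_le.mp m2
    linarith [a1.1, a1.2, a2.1, a2.2]

end S5

namespace S5B
open S5

noncomputable def hsup (D : Set Pt) (u : ℝ × ℝ) : ℝ := sSup ((fun x => dotIR x u) '' D)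

lemma le_hsup {D : Set Pt} (hD : D.Finite) {x : Pt} (hx : x ∈ D) (u : ℝ × ℝ) :
    dotIR x u ≤ hsup D u :=
  le_csSup (hD.image _).bddAbove ⟨x, hx, rfl⟩

lemma hsup_le {D : Set Pt} (hne : D.Nonempty) {u : ℝ × ℝ} {b : ℝ}
    (h : ∀ x ∈ D, dotIR x u ≤ b) : hsup D u ≤ b :=
  csSup_le (hne.image _) (by rintro _ ⟨x, hx, rfl⟩; exact h x hx)

lemma sum_map_sing {α : Type*} (s : Multiset α) :
    (s.map fun a => ({a} : Multiset α)).sum = s := by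
  induction s using Multiset.induction with
  | empty => simp
  | cons a s ih => simp [ih]

lemma ball_finite (x₁ : Pt) (R : ℝ) : {x : Pt | edist2 x x₁ ≤ R}.Finite := by
  set N : ℤ := ⌈R⌉
  apply Set.Finite.subset (Finset.Icc (x₁ - (N, N)) (x₁ + (N, N)) : Finset Pt).finite_toSet
  intro x hx
  have hx' : edist2 x x₁ ≤ R := hx
  have h0 : (0:ℝ) ≤ ((x.1 : ℝ) - (x₁.1 : ℝ)) ^ 2 + ((x.2 : ℝ) - (x₁.2 : ℝ)) ^ 2 := by positivity
  have hb1 : |(x.1 : ℝ) - (x₁.1 : ℝ)| ≤ R := by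
    have : Real.sqrt (((x.1 : ℝ) - (x₁.1 : ℝ)) ^ 2) ≤ edist2 x x₁ :=
      Real.sqrt_le_sqrt (by nlinarith [sq_nonneg ((x.2 : ℝ) - (x₁.2 : ℝ))])
    rw [Real.sqrt_sq_eq_abs] at this; linarith
  have hb2 : |(x.2 : ℝ) - (x₁.2 : ℝ)| ≤ R := by
    have : Real.sqrt (((x.2 : ℝ) - (x₁.2 : ℝ)) ^ 2) ≤ edist2 x x₁ :=
      Real.sqrt_le_sqrt (by nlinarith [sq_nonneg ((x.1 : ℝ) - (x₁.1 : ℝ))])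
    rw [Real.sqrt_sq_eq_abs] at this; linarith
  have hRN : R ≤ (N : ℝ) := Int.le_ceil R
  have hi1 : |x.1 - x₁.1| ≤ N := by
    have : |((x.1 - x₁.1 : ℤ) : ℝ)| ≤ (N : ℝ) := by push_cast; push_cast at hb1; linarith
    exact_mod_cast (by rwa [← Int.cast_abs] at this : ((|x.1 - x₁.1| : ℤ) : ℝ) ≤ (N : ℝ))
  have hi2 : |x.2 - x₁.2| ≤ N := by
    have : |((x.2 - x₁.2 : ℤ) : ℝ)| ≤ (N : ℝ) := by push_cast; push_cast at hb2; linarith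
    exact_mod_cast (by rwa [← Int.cast_abs] at this : ((|x.2 - x₁.2| : ℤ) : ℝ) ≤ (N : ℝ))
  simp only [Finset.coe_Icc, Set.mem_Icc]
  rw [abs_le] at hi1 hi2
  constructor
  · exact ⟨by simp [Prod.fst_sub]; omega, by simp [Prod.snd_sub]; omega⟩
  · exact ⟨by simp [Prod.fst_add]; omega, by simp [Prod.snd_add]; omega⟩

end S5B


/-- Extremal lemma: for κ sufficiently large there is ε > 0 such that every
covered droplet D satisfies |D ∩ A| ≥ ε · diam(D). -/
theorem stmt5 (𝒰 : Finset (Finset Pt)) (hU : UpdateFamily 𝒰)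
    (𝒯 : Finset (ℝ × ℝ)) (h𝒯 : (𝒯 : Set (ℝ × ℝ)) ⊆ unitCircle)
    (h0 : (0 : ℝ × ℝ) ∈ interior (convexHull ℝ (𝒯 : Set (ℝ × ℝ)))) :
    ∃ κ₀ : ℝ, ∀ κ : ℝ, κ₀ ≤ κ → ∀ Dhat : Set Pt, GoodBase κ 𝒯 Dhat →
      ∃ ε : ℝ, 0 < ε ∧ ∀ A : Finset Pt, ∀ D : Set Pt, CoveredBy κ 𝒯 Dhat A D →
        ε * diam D ≤ ((D ∩ (A : Set Pt)).ncard : ℝ) := by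
  classical
  refine ⟨0, ?_⟩
  intro κ _ Dhat hbase
  obtain ⟨⟨hDne, _⟩, hDfin, hD0, hκ2, hκ1⟩ := hbase
  have hκ0 : 0 ≤ κ := by linarith
  have hTne : 𝒯.Nonempty := by
    rcases Finset.eq_empty_or_nonempty 𝒯 with h | h
    · subst h; simp at h0
    · exact h
  obtain ⟨r, hr, hball⟩ : ∃ r > 0,
      Metric.closedBall (0 : ℝ × ℝ) r ⊆ convexHull ℝ (𝒯 : Set (ℝ × ℝ)) := by
    obtain ⟨ρ, hρ, hsub⟩ := Metric.mem_nhds_iff.mp (mem_interior_iff_mem_nhds.mp h0)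
    exact ⟨ρ / 2, by linarith, (Metric.closedBall_subset_ball (by linarith)).trans hsub⟩
  have hconv : ∀ z : ℝ × ℝ, ConvexOn ℝ (Set.univ : Set (ℝ × ℝ)) (fun w => dotRR z w) := by
    intro z
    refine ⟨convex_univ, fun x _ y _ a b _ _ _ => le_of_eq ?_⟩
    simp only [dotRR, Prod.fst_add, Prod.snd_add, Prod.smul_fst, Prod.smul_snd, smul_eq_mul]
    ring
  have hKD : ∀ z : ℝ × ℝ, ∃ u ∈ 𝒯, r * S5.nrm z ≤ dotRR z u := by
    intro z
    by_cases hz : S5.nrm z = 0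
    · obtain ⟨u, hu⟩ := hTne
      refine ⟨u, hu, ?_⟩
      have h1 : z.1 ^ 2 + z.2 ^ 2 = 0 := by
        have h2 := Real.sqrt_eq_zero'.mp hz
        nlinarith [sq_nonneg z.1, sq_nonneg z.2]
      have hz1 : z.1 = 0 := by nlinarith [sq_nonneg z.1, sq_nonneg z.2]
      have hz2 : z.2 = 0 := by nlinarith [sq_nonneg z.1, sq_nonneg z.2]
      simp [dotRR, hz1, hz2, hz]
    · have hnz : 0 < S5.nrm z := lt_of_le_of_ne (Real.sqrt_nonneg _) (Ne.symm hz)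
      have hsq : S5.nrm z ^ 2 = z.1 ^ 2 + z.2 ^ 2 := Real.sq_sqrt (by positivity)
      set v : ℝ × ℝ := ((r / S5.nrm z) * z.1, (r / S5.nrm z) * z.2) with hv
      have hz1 : |z.1| ≤ S5.nrm z := by
        rw [← Real.sqrt_sq_eq_abs]; exact Real.sqrt_le_sqrt (by nlinarith [sq_nonneg z.2])
      have hz2 : |z.2| ≤ S5.nrm z := by
        rw [← Real.sqrt_sq_eq_abs]; exact Real.sqrt_le_sqrt (by nlinarith [sq_nonneg z.1])
      have hc : 0 ≤ r / S5.nrm z := by positivity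
      have hvmem : v ∈ Metric.closedBall (0 : ℝ × ℝ) r := by
        rw [Metric.mem_closedBall, dist_zero_right, Prod.norm_def]
        apply max_le <;> rw [Real.norm_eq_abs, abs_mul, abs_of_nonneg hc]
        · calc r / S5.nrm z * |z.1| ≤ r / S5.nrm z * S5.nrm z :=
                mul_le_mul_of_nonneg_left hz1 hc
            _ = r := div_mul_cancel₀ r hnz.ne'
        · calc r / S5.nrm z * |z.2| ≤ r / S5.nrm z * S5.nrm z :=
                mul_le_mul_of_nonneg_left hz2 hc
            _ = r := div_mul_cancel₀ r hnz.ne'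
      obtain ⟨u, hu, hle⟩ :=
        (hconv z).exists_ge_of_mem_convexHull (Set.subset_univ _) (hball hvmem)
      refine ⟨u, hu, le_trans (le_of_eq ?_) hle⟩
      have h1 : dotRR z v = r / S5.nrm z * (z.1 ^ 2 + z.2 ^ 2) := by
        simp only [dotRR, hv]; ring
      rw [h1, ← hsq, pow_two, ← mul_assoc, div_mul_cancel₀ r hnz.ne']
  -- the weights
  set Sv : ℝ × ℝ := ∑ u ∈ 𝒯, u with hSv
  set ρ : ℝ := r / (‖Sv‖ + 1) with hρdef
  have hρ : 0 < ρ := by rw [hρdef]; positivity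
  have hmem : -(ρ • Sv) ∈ convexHull ℝ (𝒯 : Set (ℝ × ℝ)) := by
    apply hball
    rw [Metric.mem_closedBall, dist_zero_right, norm_neg, norm_smul, Real.norm_eq_abs,
      abs_of_nonneg hρ.le, hρdef, div_mul_eq_mul_div, div_le_iff₀ (by positivity)]
    nlinarith [norm_nonneg Sv]
  rw [Finset.convexHull_eq] at hmem
  obtain ⟨w, hw0, hw1, hwc⟩ := hmem
  rw [Finset.centerMass_eq_of_sum_1 _ _ hw1] at hwc
  have hwx : ∑ u ∈ 𝒯, w u * u.1 = -(ρ * Sv.1) := by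
    have h := congrArg Prod.fst hwc
    simpa [Prod.fst_sum, smul_eq_mul] using h
  have hwy : ∑ u ∈ 𝒯, w u * u.2 = -(ρ * Sv.2) := by
    have h := congrArg Prod.snd hwc
    simpa [Prod.snd_sum, smul_eq_mul] using h
  set T : ℝ := 1 + ρ * 𝒯.card with hT
  have hTpos : 0 < T := by rw [hT]; positivity
  set lam : ℝ × ℝ → ℝ := fun u => (w u + ρ) / T with hlam
  set δ : ℝ := ρ / T with hδdef
  have hδ : 0 < δ := by rw [hδdef]; positivity
  have hlamδ : ∀ u ∈ 𝒯, δ ≤ lam u := by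
    intro u hu
    rw [hδdef, hlam]
    exact (div_le_div_iff_of_pos_right hTpos).mpr (by linarith [hw0 u hu])
  have hlampos : ∀ u ∈ 𝒯, 0 ≤ lam u := fun u hu => le_trans hδ.le (hlamδ u hu)
  have hlam1 : ∑ u ∈ 𝒯, lam u = 1 := by
    simp only [hlam]
    rw [← Finset.sum_div, Finset.sum_add_distrib, hw1, Finset.sum_const, nsmul_eq_mul]
    have h : (1 : ℝ) + 𝒯.card * ρ = T := by rw [hT]; ring
    rw [h, div_self hTpos.ne']
  have hlamx : ∑ u ∈ 𝒯, lam u * u.1 = 0 := by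
    simp only [hlam, div_mul_eq_mul_div]
    rw [← Finset.sum_div]
    have h : ∑ u ∈ 𝒯, (w u + ρ) * u.1 = (∑ u ∈ 𝒯, w u * u.1) + ρ * ∑ u ∈ 𝒯, u.1 := by
      rw [Finset.mul_sum, ← Finset.sum_add_distrib]
      exact Finset.sum_congr rfl fun u _ => by ring
    have hS1 : Sv.1 = ∑ u ∈ 𝒯, u.1 := by rw [hSv, Prod.fst_sum]
    rw [h, hwx, ← hS1, neg_add_cancel, zero_div]
  have hlamy : ∑ u ∈ 𝒯, lam u * u.2 = 0 := by
    simp only [hlam, div_mul_eq_mul_div]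
    rw [← Finset.sum_div]
    have h : ∑ u ∈ 𝒯, (w u + ρ) * u.2 = (∑ u ∈ 𝒯, w u * u.2) + ρ * ∑ u ∈ 𝒯, u.2 := by
      rw [Finset.mul_sum, ← Finset.sum_add_distrib]
      exact Finset.sum_congr rfl fun u _ => by ring
    have hS2 : Sv.2 = ∑ u ∈ 𝒯, u.2 := by rw [hSv, Prod.snd_sum]
    rw [h, hwy, ← hS2, neg_add_cancel, zero_div]
  have hzero : ∀ a : Pt, ∑ u ∈ 𝒯, lam u * dotIR a u = 0 := by
    intro a
    have h : ∀ u ∈ 𝒯, lam u * dotIR a u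
        = (a.1 : ℝ) * (lam u * u.1) + (a.2 : ℝ) * (lam u * u.2) := by
      intro u _; simp only [dotIR]; ring
    rw [Finset.sum_congr rfl h, Finset.sum_add_distrib, ← Finset.mul_sum, ← Finset.mul_sum,
      hlamx, hlamy]
    ring
  -- the functional Φ
  set Phi : Set Pt → ℝ := fun D => ∑ u ∈ 𝒯, lam u * S5B.hsup D u with hPhi
  have hPhi_lb : ∀ D : Set Pt, D.Finite → ∀ x ∈ D, ∀ y ∈ D,
      δ * (r * edist2 x y) ≤ Phi D := by
    intro D hDf x hx y hy
    obtain ⟨u₀, hu₀T, hu₀⟩ := hKD ((x.1 : ℝ) - (y.1 : ℝ), (x.2 : ℝ) - (y.2 : ℝ))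
    rw [S5.dotRR_sub_dotIR, ← S5.edist2_eq] at hu₀
    have hterm : ∀ u ∈ 𝒯, 0 ≤ lam u * (S5B.hsup D u - dotIR y u) := by
      intro u hu
      exact mul_nonneg (hlampos u hu) (by linarith [S5B.le_hsup hDf hy u])
    have hsingle : lam u₀ * (S5B.hsup D u₀ - dotIR y u₀)
        ≤ ∑ u ∈ 𝒯, lam u * (S5B.hsup D u - dotIR y u) :=
      Finset.single_le_sum hterm hu₀T
    have hsum : ∑ u ∈ 𝒯, lam u * (S5B.hsup D u - dotIR y u) = Phi D := by
      have h : ∀ u ∈ 𝒯, lam u * (S5B.hsup D u - dotIR y u)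
          = lam u * S5B.hsup D u - lam u * dotIR y u := fun u _ => by ring
      rw [Finset.sum_congr rfl h, Finset.sum_sub_distrib, hzero y, sub_zero, hPhi]
    have hx0 : dotIR x u₀ ≤ S5B.hsup D u₀ := S5B.le_hsup hDf hx u₀
    have hδlam : δ ≤ lam u₀ := hlamδ u₀ hu₀T
    have hre : 0 ≤ r * edist2 x y := mul_nonneg hr.le (Real.sqrt_nonneg _)
    calc δ * (r * edist2 x y) ≤ lam u₀ * (dotIR x u₀ - dotIR y u₀) :=
          mul_le_mul hδlam (by linarith) hre (by linarith)
      _ ≤ lam u₀ * (S5B.hsup D u₀ - dotIR y u₀) :=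
          mul_le_mul_of_nonneg_left (by linarith) (by linarith)
      _ ≤ ∑ u ∈ 𝒯, lam u * (S5B.hsup D u - dotIR y u) := hsingle
      _ = Phi D := hsum
  have hPhi_nonneg : ∀ D : Set Pt, D.Finite → D.Nonempty → 0 ≤ Phi D := by
    rintro D hDf ⟨x, hx⟩
    have h := hPhi_lb D hDf x hx x hx
    have he : edist2 x x = 0 := by simp [edist2]
    rw [he] at h; linarith
  have hPhi_transl : ∀ (a : Pt) (D : Set Pt), D.Finite → D.Nonempty →
      Phi (translatePt a D) = Phi D := by
    intro a D hDf hDne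
    have hsupt : ∀ u : ℝ × ℝ, S5B.hsup (translatePt a D) u = dotIR a u + S5B.hsup D u := by
      intro u
      apply le_antisymm
      · apply S5B.hsup_le (hDne.image _)
        rintro _ ⟨x, hx, rfl⟩
        rw [S5.dotIR_add]
        linarith [S5B.le_hsup hDf hx u]
      · have h1 : S5B.hsup D u ≤ S5B.hsup (translatePt a D) u - dotIR a u := by
          apply S5B.hsup_le hDne
          intro x hx
          have hm : a + x ∈ translatePt a D := ⟨x, hx, rfl⟩
          have hDf' : (translatePt a D).Finite := hDf.image _
          have h2 := S5B.le_hsup hDf' hm u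
          rw [S5.dotIR_add] at h2
          linarith
        linarith
    have h3 : ∀ u ∈ 𝒯, lam u * S5B.hsup (translatePt a D) u
        = lam u * dotIR a u + lam u * S5B.hsup D u := by
      intro u _; rw [hsupt u]; ring
    simp only [hPhi]
    rw [Finset.sum_congr rfl h3, Finset.sum_add_distrib, hzero a, zero_add]
  -- merging estimate
  have hmerge : ∀ D₁ D₂ D₃ : Set Pt, D₁.Finite → D₂.Finite → D₁.Nonempty → D₂.Nonempty →
      DropletsClose κ D₁ D₂ → SmallestDroplet 𝒯 (D₁ ∪ D₂) D₃ →
      D₃.Finite ∧ Phi D₃ ≤ Phi D₁ + Phi D₂ + κ + 3 := by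
    intro D₁ D₂ D₃ hf₁ hf₂ hn₁ hn₂ hclose hsm
    obtain ⟨x₁, hx₁, x₂, hx₂, hdist⟩ := hclose
    have hUf : (D₁ ∪ D₂).Finite := hf₁.union hf₂
    have hUne : (D₁ ∪ D₂).Nonempty := hn₁.mono Set.subset_union_left
    have hcut : ∀ u : ℝ × ℝ, ∃ a : Pt, u ∈ 𝒯 →
        S5B.hsup (D₁ ∪ D₂) u < dotIR a u ∧ dotIR a u ≤ S5B.hsup (D₁ ∪ D₂) u + 3 := by
      intro u
      by_cases hu : u ∈ 𝒯
      · obtain ⟨a, ha1, ha2⟩ := S5.exists_cut u (h𝒯 hu) (S5B.hsup (D₁ ∪ D₂) u)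
        exact ⟨a, fun _ => ⟨ha1, ha2⟩⟩
      · exact ⟨0, fun h => absurd h hu⟩
    choose aF haF using hcut
    have hUE : (D₁ ∪ D₂) ⊆ ⋂ u ∈ 𝒯, translHalfPlane u (aF u) := by
      intro x hx
      simp only [Set.mem_iInter]
      intro u hu
      show dotIR (x - aF u) u < 0
      rw [S5.dotIR_sub]
      have h1 := S5B.le_hsup hUf hx u
      linarith [(haF u hu).1]
    have hEdrop : IsDroplet 𝒯 (⋂ u ∈ 𝒯, translHalfPlane u (aF u)) :=
      ⟨hUne.mono hUE, aF, rfl⟩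
    have hD₃E : D₃ ⊆ ⋂ u ∈ 𝒯, translHalfPlane u (aF u) := hsm.2.2 _ hEdrop hUE
    have hd₃ne : D₃.Nonempty := hsm.1.1
    obtain ⟨R, hR⟩ : ∃ R : ℝ, ∀ y ∈ D₁ ∪ D₂, edist2 y x₁ ≤ R := by
      obtain ⟨R, hR⟩ := (hUf.image fun y => edist2 y x₁).bddAbove
      exact ⟨R, fun y hy => hR ⟨y, hy, rfl⟩⟩
    have hsupbd : ∀ u ∈ 𝒯, ∀ x ∈ D₃, dotIR x u ≤ S5B.hsup (D₁ ∪ D₂) u + 3 := by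
      intro u hu x hx
      have hxE := hD₃E hx
      simp only [Set.mem_iInter] at hxE
      have h2 : dotIR (x - aF u) u < 0 := hxE u hu
      rw [S5.dotIR_sub] at h2
      linarith [(haF u hu).2]
    have hscale : ∀ x ∈ D₃, edist2 x x₁ ≤ (R + 3) / r := by
      intro x hx
      obtain ⟨u, huT, hu⟩ := hKD ((x.1 : ℝ) - (x₁.1 : ℝ), (x.2 : ℝ) - (x₁.2 : ℝ))
      rw [S5.dotRR_sub_dotIR, ← S5.edist2_eq] at hu
      have h3 := hsupbd u huT x hx
      have h4 : S5B.hsup (D₁ ∪ D₂) u ≤ dotIR x₁ u + R := by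
        apply S5B.hsup_le hUne
        intro y hy
        have h5 := S5.dotRR_le_nrm ((y.1 : ℝ) - (x₁.1 : ℝ), (y.2 : ℝ) - (x₁.2 : ℝ)) u (h𝒯 huT)
        rw [S5.dotRR_sub_dotIR, ← S5.edist2_eq] at h5
        linarith [hR y hy]
      rw [le_div_iff₀ hr]
      nlinarith
    have hD₃f : D₃.Finite := (S5B.ball_finite x₁ ((R + 3) / r)).subset hscale
    refine ⟨hD₃f, ?_⟩
    have hκcs : ∀ u ∈ 𝒯, dotIR x₂ u - dotIR x₁ u ≤ κ := by
      intro u hu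
      have h := S5.dotRR_le_nrm ((x₂.1 : ℝ) - (x₁.1 : ℝ), (x₂.2 : ℝ) - (x₁.2 : ℝ)) u (h𝒯 hu)
      rw [S5.dotRR_sub_dotIR, ← S5.edist2_eq] at h
      have hsymm : edist2 x₂ x₁ = edist2 x₁ x₂ := by
        simp only [edist2]; ring_nf
      rw [hsymm] at h
      linarith
    have hkey : ∀ u ∈ 𝒯, S5B.hsup D₃ u
        ≤ S5B.hsup D₁ u + S5B.hsup D₂ u + κ + 3 - dotIR x₂ u := by
      intro u hu
      have h3 : S5B.hsup D₃ u ≤ S5B.hsup (D₁ ∪ D₂) u + 3 :=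
        S5B.hsup_le hd₃ne fun x hx => hsupbd u hu x hx
      have hUm : S5B.hsup (D₁ ∪ D₂) u ≤ max (S5B.hsup D₁ u) (S5B.hsup D₂ u) := by
        apply S5B.hsup_le hUne
        rintro x (hx | hx)
        · exact le_trans (S5B.le_hsup hf₁ hx u) (le_max_left _ _)
        · exact le_trans (S5B.le_hsup hf₂ hx u) (le_max_right _ _)
      have hx₂u : dotIR x₂ u ≤ S5B.hsup D₂ u := S5B.le_hsup hf₂ hx₂ u
      have hx₁u : dotIR x₂ u - κ ≤ S5B.hsup D₁ u := by
        have h6 := S5B.le_hsup hf₁ hx₁ u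
        linarith [hκcs u hu]
      have hmx : max (S5B.hsup D₁ u) (S5B.hsup D₂ u)
          ≤ S5B.hsup D₁ u + S5B.hsup D₂ u + κ - dotIR x₂ u :=
        max_le (by linarith) (by linarith)
      linarith
    have h1 : Phi D₃ ≤ ∑ u ∈ 𝒯, lam u * (S5B.hsup D₁ u + S5B.hsup D₂ u + κ + 3 - dotIR x₂ u) := by
      simp only [hPhi]
      exact Finset.sum_le_sum fun u hu => mul_le_mul_of_nonneg_left (hkey u hu) (hlampos u hu)
    have hexp : ∑ u ∈ 𝒯, lam u * (S5B.hsup D₁ u + S5B.hsup D₂ u + κ + 3 - dotIR x₂ u)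
        = (∑ u ∈ 𝒯, lam u * S5B.hsup D₁ u) + (∑ u ∈ 𝒯, lam u * S5B.hsup D₂ u)
          + (κ + 3) * (∑ u ∈ 𝒯, lam u) - ∑ u ∈ 𝒯, lam u * dotIR x₂ u := by
      have h : ∀ u ∈ 𝒯, lam u * (S5B.hsup D₁ u + S5B.hsup D₂ u + κ + 3 - dotIR x₂ u)
          = (lam u * S5B.hsup D₁ u + lam u * S5B.hsup D₂ u + (κ + 3) * lam u)
            - lam u * dotIR x₂ u := fun u _ => by ring
      rw [Finset.sum_congr rfl h, Finset.sum_sub_distrib, Finset.sum_add_distrib,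
        Finset.sum_add_distrib, ← Finset.mul_sum]
    rw [hexp, hlam1, hzero x₂] at h1
    simp only [hPhi]
    simp only [hPhi] at h1
    linarith
  -- set up the invariant
  set M : ℝ := κ + 3 + Phi Dhat with hM
  have hPhiDhat : 0 ≤ Phi Dhat := hPhi_nonneg Dhat hDfin ⟨0, hD0⟩
  have hMpos : 0 < M := by rw [hM]; linarith
  refine ⟨δ * r / M, div_pos (mul_pos hδ hr) hMpos, ?_⟩
  intro A D hcov
  set Inv : Multiset (Set Pt) → Prop := fun C =>
    ∃ P : Multiset (Set Pt × Finset Pt), P.map Prod.fst = C ∧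
      (P.map fun p : Set Pt × Finset Pt => p.2.val).sum.Nodup ∧
      ∀ p ∈ P, p.1.Finite ∧ p.1.Nonempty ∧ (↑p.2 : Set Pt) ⊆ p.1 ∩ (↑A : Set Pt) ∧
        Phi p.1 + (κ + 3) ≤ M * p.2.card with hInvDef
  have hbaseInv : Inv (initColl Dhat A) := by
    refine ⟨A.val.map fun a => (translatePt a Dhat, {a}), ?_, ?_, ?_⟩
    · rw [Multiset.map_map]; rfl
    · rw [Multiset.map_map]
      have h : ((fun p : Set Pt × Finset Pt => p.2.val)
          ∘ fun a : Pt => (translatePt a Dhat, ({a} : Finset Pt)))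
          = fun a : Pt => ({a} : Multiset Pt) := by funext a; rfl
      rw [h, S5B.sum_map_sing]
      exact A.nodup
    · rintro p hp
      obtain ⟨a, ha, rfl⟩ := Multiset.mem_map.mp hp
      have haA : a ∈ A := ha
      have htf : (translatePt a Dhat).Finite := hDfin.image _
      have hmem0 : a ∈ translatePt a Dhat := ⟨0, hD0, add_zero a⟩
      refine ⟨htf, ⟨a, hmem0⟩, ?_, ?_⟩
      · intro x hx
        simp only [Finset.coe_singleton, Set.mem_singleton_iff] at hx
        subst hx
        exact ⟨hmem0, haA⟩
      · have ht := hPhi_transl a Dhat hDfin ⟨0, hD0⟩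
        simp only [Finset.card_singleton, Nat.cast_one, mul_one, ht, hM]
        linarith
  have hstepInv : ∀ C C' : Multiset (Set Pt), Inv C → MergeStep κ 𝒯 C C' → Inv C' := by
    rintro C C' hI hMS
    obtain ⟨P, hPfst, hnd, hP⟩ := hI
    obtain ⟨D₁, D₂, D₃, C₀, hC, hclose, hsm, hC'⟩ := hMS
    rw [hC] at hPfst
    obtain ⟨p₁, hp₁P, hp₁fst, h1⟩ := (Multiset.map_eq_cons _ _ _ _).mpr hPfst
    obtain ⟨p₂, hp₂P, hp₂fst, h2⟩ := (Multiset.map_eq_cons _ _ _ _).mpr h1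
    have hp₂P' : p₂ ∈ P := Multiset.mem_of_mem_erase hp₂P
    have hPdec : P = p₁ ::ₘ p₂ ::ₘ (P.erase p₁).erase p₂ := by
      rw [Multiset.cons_erase hp₂P, Multiset.cons_erase hp₁P]
    obtain ⟨hf₁, hn₁, hs₁, hb₁⟩ := hP p₁ hp₁P
    obtain ⟨hf₂, hn₂, hs₂, hb₂⟩ := hP p₂ hp₂P'
    have hnd' : (((p₁ ::ₘ p₂ ::ₘ (P.erase p₁).erase p₂)).map fun p : Set Pt × Finset Pt => p.2.val).sum.Nodup := by
      rw [← hPdec]; exact hnd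
    simp only [Multiset.map_cons, Multiset.sum_cons] at hnd'
    have hdisj : Disjoint p₁.2 p₂.2 := by
      have hd1 := (Multiset.nodup_add.mp hnd').2.2
      exact Finset.disjoint_val.mp (hd1.mono_right (Multiset.le_add_right _ _))
    obtain ⟨hD₃f, hΦ₃⟩ := hmerge D₁ D₂ D₃ (hp₁fst ▸ hf₁) (hp₂fst ▸ hf₂)
      (hp₁fst ▸ hn₁) (hp₂fst ▸ hn₂) hclose hsm
    refine ⟨(D₃, p₁.2.disjUnion p₂.2 hdisj) ::ₘ (P.erase p₁).erase p₂, ?_, ?_, ?_⟩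
    · rw [Multiset.map_cons, h2, hC']
    · simp only [Multiset.map_cons, Multiset.sum_cons]
      have hval : (p₁.2.disjUnion p₂.2 hdisj).val = p₁.2.val + p₂.2.val := rfl
      rw [hval, add_assoc]
      exact hnd'
    · rintro p hp
      rcases Multiset.mem_cons.mp hp with rfl | hp₀
      · have hUD : D₁ ∪ D₂ ⊆ D₃ := hsm.2.1
        refine ⟨hD₃f, hsm.1.1, ?_, ?_⟩
        · intro x hx
          rw [Finset.disjUnion_eq_union, Finset.coe_union] at hx
          rcases hx with hx | hx
          · obtain ⟨hx1, hx2⟩ := hs₁ hx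
            exact ⟨hUD (Or.inl (hp₁fst ▸ hx1)), hx2⟩
          · obtain ⟨hx1, hx2⟩ := hs₂ hx
            exact ⟨hUD (Or.inr (hp₂fst ▸ hx1)), hx2⟩
        · rw [Finset.card_disjUnion]
          push_cast
          rw [hp₁fst] at hb₁
          rw [hp₂fst] at hb₂
          rw [mul_add]
          linarith
      · exact hP p (by rw [hPdec]; exact Multiset.mem_cons_of_mem (Multiset.mem_cons_of_mem hp₀))
  have hreachInv : ∀ C : Multiset (Set Pt), Reachable κ 𝒯 Dhat A C → Inv C := by
    intro C hC
    induction hC with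
    | refl => exact hbaseInv
    | tail _ hstep ih => exact hstepInv _ _ ih hstep
  obtain ⟨C, hreach, hDC⟩ := hcov
  obtain ⟨P, hPfst, hnd, hP⟩ := hreachInv C hreach
  rw [← hPfst] at hDC
  obtain ⟨p, hpP, hpfst⟩ := Multiset.mem_map.mp hDC
  obtain ⟨hfD, hneD, hsub, hbnd⟩ := hP p hpP
  rw [hpfst] at hfD hneD hsub hbnd
  have hcard : (p.2.card : ℝ) ≤ ((D ∩ (↑A : Set Pt)).ncard : ℝ) := by
    have h1 : (↑p.2 : Set Pt).ncard ≤ (D ∩ (↑A : Set Pt)).ncard :=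
      Set.ncard_le_ncard hsub (hfD.inter_of_left _)
    rw [Set.ncard_coe_finset] at h1
    exact_mod_cast h1
  have hPhiD0 : 0 ≤ Phi D := hPhi_nonneg D hfD hneD
  have hdiam : diam D ≤ Phi D / (δ * r) := by
    have hub : ∀ d ∈ {d : ℝ | ∃ x ∈ D, ∃ y ∈ D, d = edist2 x y}, d ≤ Phi D / (δ * r) := by
      rintro d ⟨x, hx, y, hy, rfl⟩
      rw [le_div_iff₀ (mul_pos hδ hr)]
      calc edist2 x y * (δ * r) = δ * (r * edist2 x y) := by ring
        _ ≤ Phi D := hPhi_lb D hfD x hx y hy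
    exact Real.sSup_le hub (div_nonneg hPhiD0 (mul_pos hδ hr).le)
  have hε : δ * r / M * diam D ≤ (p.2.card : ℝ) := by
    have h2 : δ * r / M * diam D ≤ δ * r / M * (Phi D / (δ * r)) :=
      mul_le_mul_of_nonneg_left hdiam (le_of_lt (div_pos (mul_pos hδ hr) hMpos))
    have h3 : δ * r / M * (Phi D / (δ * r)) = Phi D / M := by
      rw [div_mul_div_comm, mul_comm M (δ * r), mul_div_mul_left _ _ (mul_pos hδ hr).ne']
    have h4 : Phi D / M ≤ (p.2.card : ℝ) := by
      rw [div_le_iff₀ hMpos]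
      linarith [hbnd, mul_comm M ((p.2.card : ℝ))]
    linarith
  linarith [hcard, hε]
end

section
/- Let 𝒰 be an update family and let y ∈ 𝒮(𝒰) be a rational direction satisfying: (a) every X ∈ 𝒰 has at most one point in l_y or at least one point in H_{−y}; and (b) there exists an injective map g : 𝒰 → 𝒰 such that whenever X ∈ 𝒰 satisfies X ⊆ H_y ∪ {x} for some x ∈ l_y, then g(X) ⊆ H_{−y} ∪ {−x}. Then for every L ≥ 1, every segment Y of L consecutive points of l_y, and every configuration η ∈ {+,−}^Y, one has Σ_{v∈η⁺} r_v(η) ≤ Σ_{u∈η⁻} r_u(η). (In particular y is a fair direction for 𝒰.) -/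
open scoped BigOperators

open Classical in
/-- A distinguished point of `X` on the line orthogonal to `y` (if any). -/
noncomputable def xptAux (y : ℝ × ℝ) (X : Finset Pt) : Pt :=
  if h : (X.filter fun p => dotIR p y = 0).Nonempty then h.choose else 0

open Classical in
lemma xptAux_mem (y : ℝ × ℝ) (X : Finset Pt)
    (h : (X.filter fun p => dotIR p y = 0).Nonempty) :
    xptAux y X ∈ X ∧ dotIR (xptAux y X) y = 0 := by
  have : xptAux y X ∈ X.filter fun p => dotIR p y = 0 := by
    rw [xptAux, dif_pos h]; exact h.choose_spec
  exact Finset.mem_filter.mp this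

/-- sufficient combinatorial criterion for a rational stable direction to be fair:
the + disagreement sum is at most the − disagreement sum for every configuration on every
segment of l_y. -/
theorem stmt6 (𝒰 : Finset (Finset Pt)) (hU : UpdateFamily 𝒰)
    (y : ℝ × ℝ) (hy : y ∈ stableSet 𝒰) (hrat : IsRationalDir y)
    (ha : ∀ X ∈ 𝒰, ({p : Pt | p ∈ X ∧ dotIR p y = 0}).Subsingleton ∨
      ∃ p ∈ X, p ∈ halfPlane (-y))
    (hb : ∃ g : Finset Pt → Finset Pt, (∀ X ∈ 𝒰, g X ∈ 𝒰) ∧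
      Set.InjOn g (𝒰 : Set (Finset Pt)) ∧
      ∀ X ∈ 𝒰, ∀ x : Pt, dotIR x y = 0 → (X : Set Pt) ⊆ halfPlane y ∪ {x} →
        ((g X : Set Pt)) ⊆ halfPlane (-y) ∪ {-x}) :
    ∀ L : ℕ, 1 ≤ L → ∀ z₀ w : Pt, z₀ ∈ lineLat y → GeneratesLine w y →
      ∀ η : Pt → Bool,
        ∑ v ∈ (segmentY z₀ w L).filter (fun v => η v = true),
            rval 𝒰 y (segmentY z₀ w L) η v ≤
        ∑ u ∈ (segmentY z₀ w L).filter (fun v => η v = false),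
            rval 𝒰 y (segmentY z₀ w L) η u := by
  classical
  obtain ⟨g, hg𝒰, hginj, hgmain⟩ := hb
  intro L hL z₀ w hz₀ hw η
  set Y := segmentY z₀ w L with hYdef
  have hwl : dotIR w y = 0 := by
    have hmem : w ∈ lineLat y := by
      rw [hw]; exact ⟨1, by simp [Prod.ext_iff]⟩
    exact hmem
  have hYl : ∀ v ∈ Y, dotIR v y = 0 := by
    intro v hv
    simp only [hYdef, segmentY, Finset.mem_image, Finset.mem_range] at hv
    obtain ⟨j, _, rfl⟩ := hv
    have hz : dotIR z₀ y = 0 := hz₀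
    simp only [dotIR] at hz hwl ⊢
    push_cast
    linear_combination hz + (j : ℝ) * hwl
  have hadd : ∀ a b : Pt, dotIR (a + b) y = dotIR a y + dotIR b y := by
    intro a b
    simp only [dotIR, Prod.fst_add, Prod.snd_add]
    push_cast; ring
  have hσ0 : ∀ v : Pt, dotIR v y = 0 →
      sigmaCfg y Y η v = (if v ∈ Y then η v else true) := by
    intro v hv
    have h1 : v ∉ halfPlane y := by
      simp only [halfPlane, Set.mem_setOf_eq, hv]; exact lt_irrefl 0
    simp [sigmaCfg, h1]
  have hσpos : ∀ v : Pt, 0 < dotIR v y → sigmaCfg y Y η v = true := by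
    intro v hv
    have h1 : v ∉ halfPlane y := by
      simp only [halfPlane, Set.mem_setOf_eq]; linarith
    have h2 : v ∉ Y := fun h => by have := hYl v h; linarith
    simp [sigmaCfg, h1, h2]
  have hrv : ∀ v : Pt, rval 𝒰 y Y η v =
      (𝒰.filter fun X => ∀ p ∈ X,
        sigmaCfg y Y η (v + p) = !(sigmaCfg y Y η v)).card := by
    intro v
    have hset : {X : Finset Pt | X ∈ 𝒰 ∧ ∀ p ∈ X,
        sigmaCfg y Y η (v + p) = !(sigmaCfg y Y η v)} =
        ↑(𝒰.filter fun X => ∀ p ∈ X,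
          sigmaCfg y Y η (v + p) = !(sigmaCfg y Y η v)) := by
      ext X; simp [Finset.mem_filter]
    rw [rval, hset, Set.ncard_coe_finset]
  have main : ∀ v : Pt, v ∈ Y → η v = true → ∀ X : Finset Pt, X ∈ 𝒰 →
      (∀ p ∈ X, sigmaCfg y Y η (v + p) = !(sigmaCfg y Y η v)) →
      (v + xptAux y X ∈ Y ∧ η (v + xptAux y X) = false ∧ g X ∈ 𝒰 ∧
        ∀ p ∈ g X, sigmaCfg y Y η (v + xptAux y X + p) =
          !(sigmaCfg y Y η (v + xptAux y X))) := by
    intro v hvY hvt X hX hcond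
    have hv0 : dotIR v y = 0 := hYl v hvY
    have hσv : sigmaCfg y Y η v = true := by
      rw [hσ0 v hv0]; simp [hvY, hvt]
    have hfalse : ∀ p ∈ X, sigmaCfg y Y η (v + p) = false := by
      intro p hp; rw [hcond p hp, hσv]; rfl
    have hle : ∀ p ∈ X, dotIR p y ≤ 0 := by
      intro p hp
      by_contra h
      push_neg at h
      have hpos : 0 < dotIR (v + p) y := by rw [hadd, hv0]; linarith
      have := hσpos _ hpos
      rw [hfalse p hp] at this
      exact Bool.false_ne_true this
    have hzero : ∀ p ∈ X, dotIR p y = 0 → (v + p ∈ Y ∧ η (v + p) = false) := by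
      intro p hp h0
      have h0' : dotIR (v + p) y = 0 := by rw [hadd, hv0, h0]; ring
      have hf := hfalse p hp
      rw [hσ0 _ h0'] at hf
      by_cases hm : v + p ∈ Y
      · rw [if_pos hm] at hf; exact ⟨hm, hf⟩
      · rw [if_neg hm] at hf; simp at hf
    have hne : (X.filter fun p => dotIR p y = 0).Nonempty := by
      by_contra h
      rw [Finset.not_nonempty_iff_eq_empty] at h
      apply hy.2 X hX
      intro p hp
      have hp' : p ∈ X := hp
      rcases lt_or_eq_of_le (hle p hp') with hlt | heq
      · exact hlt
      · exfalso
        have hmem : p ∈ X.filter fun p => dotIR p y = 0 :=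
          Finset.mem_filter.mpr ⟨hp', heq⟩
        rw [h] at hmem
        exact absurd hmem (Finset.notMem_empty p)
    obtain ⟨hxmem, hx0⟩ := xptAux_mem y X hne
    have hsub : (X : Set Pt) ⊆ halfPlane y ∪ {xptAux y X} := by
      intro p hp
      have hp' : p ∈ X := hp
      rcases lt_or_eq_of_le (hle p hp') with hlt | heq
      · exact Or.inl hlt
      · right
        have hss : ({q : Pt | q ∈ X ∧ dotIR q y = 0}).Subsingleton := by
          rcases ha X hX with h | ⟨q, hq, hq'⟩
          · exact h
          · exfalso
            have hq'' : dotIR q (-y) < 0 := hq'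
            have hneg : dotIR q (-y) = -(dotIR q y) := by
              simp only [dotIR, Prod.fst_neg, Prod.snd_neg]; ring
            rw [hneg] at hq''
            linarith [hle q hq]
        exact hss ⟨hp', heq⟩ ⟨hxmem, hx0⟩
    obtain ⟨huY, huf⟩ := hzero _ hxmem hx0
    refine ⟨huY, huf, hg𝒰 X hX, ?_⟩
    have hu0 : dotIR (v + xptAux y X) y = 0 := hYl _ huY
    have hσu : sigmaCfg y Y η (v + xptAux y X) = false := by
      rw [hσ0 _ hu0, if_pos huY]; exact huf
    intro p hp
    rw [hσu]
    have hp' : p ∈ (↑(g X) : Set Pt) := hp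
    rcases hgmain X hX (xptAux y X) hx0 hsub hp' with hH | hx
    · have hpos : 0 < dotIR p y := by
        have hlt : dotIR p (-y) < 0 := hH
        have hneg : dotIR p (-y) = -(dotIR p y) := by
          simp only [dotIR, Prod.fst_neg, Prod.snd_neg]; ring
        linarith [hneg ▸ hlt]
      have : 0 < dotIR (v + xptAux y X + p) y := by rw [hadd, hu0]; linarith
      rw [hσpos _ this]; rfl
    · have hxeq : p = -(xptAux y X) := hx
      have : v + xptAux y X + p = v := by rw [hxeq]; abel
      rw [this, hσv]; rfl
  -- now the counting argument
  let P : Pt → Finset Pt → Prop := fun v X =>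
    ∀ p ∈ X, sigmaCfg y Y η (v + p) = !(sigmaCfg y Y η v)
  calc ∑ v ∈ Y.filter (fun v => η v = true), rval 𝒰 y Y η v
      = ((Y.filter fun v => η v = true).sigma fun v =>
          𝒰.filter fun X => P v X).card := by
        rw [Finset.card_sigma]
        exact Finset.sum_congr rfl fun v _ => hrv v
    _ ≤ ((Y.filter fun v => η v = false).sigma fun v =>
          𝒰.filter fun X => P v X).card := by
        apply Finset.card_le_card_of_injOn
          (fun q => ⟨q.1 + xptAux y q.2, g q.2⟩)
        · intro q hq
          obtain ⟨hq1, hq2⟩ := Finset.mem_sigma.mp hq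
          obtain ⟨hvY, hvt⟩ := Finset.mem_filter.mp hq1
          obtain ⟨hX, hcond⟩ := Finset.mem_filter.mp hq2
          obtain ⟨h1, h2, h3, h4⟩ := main q.1 hvY hvt q.2 hX hcond
          exact Finset.mem_sigma.mpr
            ⟨Finset.mem_filter.mpr ⟨h1, h2⟩, Finset.mem_filter.mpr ⟨h3, h4⟩⟩
        · intro q hq q' hq' heq
          obtain ⟨v, X⟩ := q
          obtain ⟨v', X'⟩ := q'
          obtain ⟨hq1, hq2⟩ := Finset.mem_sigma.mp hq
          obtain ⟨hq1', hq2'⟩ := Finset.mem_sigma.mp hq'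
          have hX𝒰 : X ∈ 𝒰 := (Finset.mem_filter.mp hq2).1
          have hX'𝒰 : X' ∈ 𝒰 := (Finset.mem_filter.mp hq2').1
          simp only [Sigma.mk.inj_iff, heq_eq_eq] at heq
          obtain ⟨h1, h2⟩ := heq
          have hXX' : X = X' := hginj hX𝒰 hX'𝒰 h2
          subst hXX'
          have : v = v' := by
            have := h1
            exact add_right_cancel this
          subst this
          rfl
    _ = ∑ u ∈ Y.filter (fun v => η v = false), rval 𝒰 y Y η u := by
        rw [Finset.card_sigma]
        exact (Finset.sum_congr rfl fun v _ => hrv v).symm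
end

section
/- Fix constants c > 1 and a > 0. For q ∈ (0,1) define recursively q₀ = q and q_k := exp(−a/q_{k−1}) for k ≥ 1, and set l₀ = 1, l_k := ⌊(1/q_{k−1})^{3c}⌋ for k ≥ 1, and L_k := ∏_{i=0}^{k} l_i. Then there exists q* ∈ (0,1) such that for all 0 < q ≤ q* and all k ≥ 0, one has L_k ≤ 1/q_k. -/
open scoped BigOperators

noncomputable section

/-- The sequence q₀ = q, q_{k+1} = exp(−a/q_k). -/
def qSeq (a q : ℝ) : ℕ → ℝ
  | 0 => q
  | k + 1 => Real.exp (-a / qSeq a q k)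

/-- The sequence l₀ = 1, l_k = ⌊(1/q_{k−1})^{3c}⌋. -/
def lSeq (a c q : ℝ) : ℕ → ℝ
  | 0 => 1
  | k + 1 => (⌊(1 / qSeq a q k) ^ ((3 : ℝ) * c)⌋ : ℤ)

/-- L_k = ∏_{i=0}^{k} l_i. -/
def LSeq (a c q : ℝ) (k : ℕ) : ℝ := ∏ i ∈ Finset.range (k + 1), lSeq a c q i

end

private lemma aux_sq_le_exp {x : ℝ} (hx : 0 ≤ x) : x ^ 2 / 4 ≤ Real.exp x := by
  have h1 : x / 2 + 1 ≤ Real.exp (x / 2) := Real.add_one_le_exp (x / 2)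
  have h2 : Real.exp (x / 2) * Real.exp (x / 2) = Real.exp x := by
    rw [← Real.exp_add]; ring_nf
  nlinarith [Real.exp_pos (x / 2)]

private lemma aux_log_le {t : ℝ} (ht : 0 < t) :
    Real.log (1 / t) ≤ 2 / Real.sqrt t := by
  have hu : 0 < Real.sqrt t := Real.sqrt_pos.2 ht
  have hsq : Real.sqrt t ^ 2 = t := Real.sq_sqrt ht.le
  have h1 : (1 / t) = (1 / Real.sqrt t) ^ 2 := by
    rw [div_pow, one_pow, hsq]
  rw [h1, ← Real.rpow_natCast (1 / Real.sqrt t) 2, Real.log_rpow (by positivity)]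
  have h2 : Real.log (1 / Real.sqrt t) ≤ 1 / Real.sqrt t - 1 :=
    Real.log_le_sub_one_of_pos (by positivity)
  push_cast
  have h4 : 2 * (1 / Real.sqrt t) = 2 / Real.sqrt t := mul_one_div 2 _
  linarith

/-- for q small enough, L_k ≤ 1/q_k for all k. -/
theorem stmt9 (c a : ℝ) (hc : 1 < c) (ha : 0 < a) :
    ∃ qstar : ℝ, 0 < qstar ∧ qstar < 1 ∧
      ∀ q : ℝ, 0 < q → q ≤ qstar → ∀ k : ℕ, LSeq a c q k ≤ 1 / qSeq a q k := by
  have h3c : (0:ℝ) < 3 * c + 1 := by linarith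
  set s : ℝ := min (min (1/2) (a^2/4)) ((a/(2*(3*c+1)))^2) with hs
  have hs0 : 0 < s := by
    refine lt_min (lt_min (by norm_num) (by positivity)) (by positivity)
  have hs_half : s ≤ 1/2 := le_trans (min_le_left _ _) (min_le_left _ _)
  have hs_a : s ≤ a^2/4 := le_trans (min_le_left _ _) (min_le_right _ _)
  have hs_c : s ≤ (a/(2*(3*c+1)))^2 := min_le_right _ _
  have hs1 : s < 1 := lt_of_le_of_lt hs_half (by norm_num)
  clear_value s
  refine ⟨s, hs0, hs1, ?_⟩
  intro q hq hqs
  suffices H : ∀ k, 0 < qSeq a q k ∧ qSeq a q k ≤ s ∧ 0 ≤ LSeq a c q k ∧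
      LSeq a c q k ≤ 1 / qSeq a q k by
    intro k; exact (H k).2.2.2
  intro k
  induction k with
  | zero =>
      refine ⟨hq, hqs, ?_, ?_⟩
      · simp [LSeq, lSeq]
      · have hL1 : LSeq a c q 0 = 1 := by simp [LSeq, lSeq]
        rw [hL1]
        show (1:ℝ) ≤ 1 / qSeq a q 0
        simp only [qSeq]
        rw [le_div_iff₀ hq]; nlinarith
  | succ k ih =>
      obtain ⟨hpos, hle, hL0, hL⟩ := ih
      set t := qSeq a q k with htdef
      have hat : 0 < a / t := by positivity
      have hq1 : qSeq a q (k+1) = Real.exp (-a / t) := rfl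
      clear_value t
      have hexp : a^2 / (4 * t^2) ≤ Real.exp (a / t) := by
        have := aux_sq_le_exp hat.le
        have h4 : (a/t)^2/4 = a^2/(4*t^2) := by field_simp
        linarith [h4 ▸ this]
      have hqpos : 0 < qSeq a q (k+1) := by rw [hq1]; exact Real.exp_pos _
      constructor
      · exact hqpos
      have hqle : qSeq a q (k+1) ≤ s := by
        rw [hq1, neg_div, Real.exp_neg]
        have hb : (0:ℝ) < a^2/(4*t^2) := by positivity
        have h1 : (Real.exp (a/t))⁻¹ ≤ (a^2/(4*t^2))⁻¹ :=
          inv_anti₀ hb hexp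
        have h2 : (a^2/(4*t^2))⁻¹ = 4*t^2/a^2 := by
          rw [inv_div]
        have h3 : 4*t^2/a^2 ≤ s := by
          rw [div_le_iff₀ (by positivity)]
          nlinarith
        rw [h2] at h1
        linarith
      refine ⟨hqle, ?_, ?_⟩
      · -- 0 ≤ LSeq at k+1
        have : LSeq a c q (k+1) = LSeq a c q k * lSeq a c q (k+1) := by
          simp [LSeq, Finset.prod_range_succ]
        rw [this]
        apply mul_nonneg hL0
        simp only [lSeq, ← htdef]
        have : (0:ℝ) ≤ (1/t) ^ ((3:ℝ)*c) := Real.rpow_nonneg (by positivity) _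
        exact_mod_cast Int.floor_nonneg.2 this
      · -- main bound
        have hLs : LSeq a c q (k+1) = LSeq a c q k * lSeq a c q (k+1) := by
          simp [LSeq, Finset.prod_range_succ]
        have hlle : lSeq a c q (k+1) ≤ (1/t) ^ ((3:ℝ)*c) := by
          simp only [lSeq, ← htdef]; exact Int.floor_le _
        have hlnn : (0:ℝ) ≤ lSeq a c q (k+1) := by
          simp only [lSeq, ← htdef]
          have : (0:ℝ) ≤ (1/t) ^ ((3:ℝ)*c) := Real.rpow_nonneg (by positivity) _
          exact_mod_cast Int.floor_nonneg.2 this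
        have h1t : (0:ℝ) < 1/t := by positivity
        have hstep : LSeq a c q (k+1) ≤ (1/t) ^ ((3:ℝ)*c + 1) := by
          rw [hLs, Real.rpow_add h1t, Real.rpow_one]
          calc LSeq a c q k * lSeq a c q (k+1)
              ≤ (1/t) * ((1/t) ^ ((3:ℝ)*c)) := by
                apply mul_le_mul hL hlle hlnn h1t.le
            _ = (1/t) ^ ((3:ℝ)*c) * (1/t) := mul_comm _ _
        have hfinal : (1/t) ^ ((3:ℝ)*c + 1) ≤ Real.exp (a / t) := by
          rw [Real.rpow_def_of_pos h1t]
          apply Real.exp_le_exp.2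
          have hlog := aux_log_le hpos
          have hu : 0 < Real.sqrt t := Real.sqrt_pos.2 hpos
          have hsq : Real.sqrt t ^ 2 = t := Real.sq_sqrt hpos.le
          have hub : Real.sqrt t ≤ a / (2*(3*c+1)) := by
            have h2 : t ≤ (a/(2*(3*c+1)))^2 := le_trans hle hs_c
            have := Real.sqrt_le_sqrt h2
            rwa [Real.sqrt_sq (by positivity)] at this
          have hlog0 : 0 ≤ Real.log (1/t) := by
            apply Real.log_nonneg
            rw [le_div_iff₀ hpos]; linarith
          have step1 : ((3:ℝ)*c + 1) * Real.log (1/t) ≤ ((3:ℝ)*c+1) * (2 / Real.sqrt t) :=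
            mul_le_mul_of_nonneg_left hlog h3c.le
          have step2 : ((3:ℝ)*c+1) * (2 / Real.sqrt t) ≤ a / t := by
            have hub' : Real.sqrt t * (2*(3*c+1)) ≤ a :=
              (le_div_iff₀ (by positivity)).1 hub
            rw [mul_div_assoc', div_le_div_iff₀ hu hpos]
            nlinarith [hu, hsq]
          calc Real.log (1/t) * ((3:ℝ)*c+1) = ((3:ℝ)*c+1) * Real.log (1/t) := mul_comm _ _
            _ ≤ a / t := le_trans step1 step2
        rw [hq1, neg_div, Real.exp_neg, one_div, inv_inv]
        exact le_trans hstep hfinal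
end

section
/- Let 𝒰_▷ := {{(−1,1),(−1,−1)}, {(0,1),(1,1)}, {(0,−1),(1,−1)}} and y = −e₁ ∈ 𝒮(𝒰_▷). For n ≥ 1, let Y = {(0,j) : 0 ≤ j ≤ 2n} (a segment of L = 2n+1 consecutive points of l_y) and let η ∈ {+,−}^Y be the configuration with η⁺ = {(0,2k) : 0 ≤ k ≤ n}. Then Σ_{u∈η⁻} r_u(η) = n while Σ_{v∈η⁺} r_v(η) = 2n; in particular the inequality Σ_{v∈η⁺} r_v(η) ≤ Σ_{u∈η⁻} r_u(η) fails for this configuration. -/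
open scoped BigOperators

/-- The family 𝒰_▷. -/
def Utri : Finset (Finset Pt) :=
  {({(-1, 1), (-1, -1)} : Finset Pt), ({(0, 1), (1, 1)} : Finset Pt),
    ({(0, -1), (1, -1)} : Finset Pt)}

/-!
For `y = -e₁` the column `x.1 = 1` lies in `H_y` and is all `-`, while the column `x.1 = -1`
misses both `H_y` and `Y` and is all `+`. So the rule `{(-1,1),(-1,-1)}` fires exactly at the
`-` sites of `Y`, and the rules `{(0,±1),(1,±1)}` fire at a `+` site exactly when its upper,
resp. lower, neighbour is a `-` site. Each of the `n` odd sites therefore contributes `1` to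
`Σ_{η⁻} r`, and `2` to `Σ_{η⁺} r`, once through each of its two even neighbours.
-/

lemma rval_eq_card_filter (𝒰 : Finset (Finset Pt)) (y : ℝ × ℝ) (Y : Finset Pt)
    (η : Pt → Bool) (v : Pt) :
    rval 𝒰 y Y η v =
      (𝒰.filter fun X => ∀ p ∈ X, sigmaCfg y Y η (v + p) = !(sigmaCfg y Y η v)).card := by
  classical
  rw [rval, ← Set.ncard_coe_finset]
  simp

lemma mem_segmentY_vertical (L : ℕ) (x : Pt) :
    x ∈ segmentY (0, 0) (0, 1) L ↔ x.1 = 0 ∧ 0 ≤ x.2 ∧ x.2 < L := by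
  obtain ⟨a, b⟩ := x
  simp only [segmentY, Finset.mem_image, Finset.mem_range, Prod.mk.injEq]
  constructor
  · rintro ⟨j, hj, rfl, rfl⟩
    omega
  · rintro ⟨rfl, h0, hL⟩
    exact ⟨b.toNat, by omega, by simp, by simp; omega⟩

section NegE1

variable (Y : Finset Pt) (η : Pt → Bool)

lemma sigmaCfg_neg_e1 (x : Pt) :
    sigmaCfg (-1, 0) Y η x = if 0 < x.1 then false else if x ∈ Y then η x else true := by
  have hH : x ∈ halfPlane (-1, 0) ↔ 0 < x.1 := by simp [halfPlane, dotIR]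
  simp only [sigmaCfg, hH]

lemma rval_Utri_of_fst_eq_zero (hY : ∀ x ∈ Y, x.1 = 0) (j : ℤ) :
    rval Utri (-1, 0) Y η (0, j) =
      if sigmaCfg (-1, 0) Y η (0, j) then
        (if sigmaCfg (-1, 0) Y η (0, j + 1) then 0 else 1) +
          (if sigmaCfg (-1, 0) Y η (0, j - 1) then 0 else 1)
      else 1 := by
  have hleft (b : ℤ) : sigmaCfg (-1, 0) Y η (-1, b) = true := by
    have : ((-1, b) : Pt) ∉ Y := fun h => by simpa using hY _ h
    simp [sigmaCfg_neg_e1, this]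
  have hright (b : ℤ) : sigmaCfg (-1, 0) Y η (1, b) = false := by
    simp [sigmaCfg_neg_e1]
  rw [rval_eq_card_filter, Finset.card_filter, Utri, Finset.sum_insert (by decide),
    Finset.sum_insert (by decide), Finset.sum_singleton]
  simp only [Finset.mem_insert, Finset.mem_singleton, forall_eq_or_imp, forall_eq,
    Prod.mk_add_mk, zero_add, hright, ← sub_eq_add_neg]
  cases sigmaCfg (-1, 0) Y η (0, j) <;> cases sigmaCfg (-1, 0) Y η (0, j + 1) <;>
    cases sigmaCfg (-1, 0) Y η (0, j - 1) <;> simp [hleft]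

end NegE1

section Alternating

variable (n : ℕ)

def altSegment : Finset Pt := segmentY (0, 0) (0, 1) (2 * n + 1)

def altCfg : Pt → Bool := fun x => decide (x.2 % 2 = 0)

lemma sigmaCfg_altSegment (j : ℤ) :
    sigmaCfg (-1, 0) (altSegment n) altCfg (0, j) = decide (j < 0 ∨ 2 * n < j ∨ j % 2 = 0) := by
  rw [Bool.eq_iff_iff]
  simp only [sigmaCfg_neg_e1, altSegment, mem_segmentY_vertical, altCfg, lt_irrefl, if_false,
    decide_eq_true_eq, true_and]
  split_ifs <;> simp only [decide_eq_true_eq, true_iff] <;> omega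

lemma fst_eq_zero_of_mem_altSegment {x : Pt} (hx : x ∈ altSegment n) : x.1 = 0 :=
  ((mem_segmentY_vertical _ x).1 hx).1

lemma rval_altSegment_odd {k : ℕ} (hk : k < n) :
    rval Utri (-1, 0) (altSegment n) altCfg (0, 2 * k + 1) = 1 := by
  rw [rval_Utri_of_fst_eq_zero _ _ (fun _ => fst_eq_zero_of_mem_altSegment n),
    sigmaCfg_altSegment, if_neg (by simp only [decide_eq_true_eq]; omega)]

lemma rval_altSegment_even {k : ℕ} (hk : k ≤ n) :
    rval Utri (-1, 0) (altSegment n) altCfg (0, 2 * k) =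
      (if 0 < k then 1 else 0) + (if k < n then 1 else 0) := by
  rw [rval_Utri_of_fst_eq_zero _ _ (fun _ => fst_eq_zero_of_mem_altSegment n),
    sigmaCfg_altSegment, sigmaCfg_altSegment, sigmaCfg_altSegment]
  simp only [decide_eq_true_eq]
  split_ifs <;> omega

lemma altSegment_filter_minus :
    (altSegment n).filter (fun v => altCfg v = false) =
      (Finset.range n).image fun k : ℕ => ((0, 2 * k + 1) : Pt) := by
  ext ⟨a, b⟩
  simp only [Finset.mem_filter, altSegment, mem_segmentY_vertical, altCfg, Finset.mem_image,
    Finset.mem_range, Prod.mk.injEq, decide_eq_false_iff_not]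
  constructor
  · rintro ⟨⟨rfl, h0, hb⟩, hodd⟩
    exact ⟨(b / 2).toNat, by omega, rfl, by omega⟩
  · rintro ⟨k, hk, rfl, rfl⟩
    omega

lemma altSegment_filter_plus :
    (altSegment n).filter (fun v => altCfg v = true) =
      (Finset.range (n + 1)).image fun k : ℕ => ((0, 2 * k) : Pt) := by
  ext ⟨a, b⟩
  simp only [Finset.mem_filter, altSegment, mem_segmentY_vertical, altCfg, Finset.mem_image,
    Finset.mem_range, Prod.mk.injEq, decide_eq_true_eq]
  constructor
  · rintro ⟨⟨rfl, h0, hb⟩, heven⟩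
    exact ⟨(b / 2).toNat, by omega, rfl, by omega⟩
  · rintro ⟨k, hk, rfl, rfl⟩
    omega

lemma sum_rval_altSegment_minus :
    ∑ u ∈ (altSegment n).filter (fun v => altCfg v = false),
      rval Utri (-1, 0) (altSegment n) altCfg u = n := by
  rw [altSegment_filter_minus, Finset.sum_image (by intro _ _ _ _ h; simpa using h),
    Finset.sum_congr rfl fun k hk => rval_altSegment_odd n (Finset.mem_range.1 hk)]
  simp

lemma sum_rval_altSegment_plus :
    ∑ v ∈ (altSegment n).filter (fun v => altCfg v = true),
      rval Utri (-1, 0) (altSegment n) altCfg v = 2 * n := by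
  rw [altSegment_filter_plus, Finset.sum_image (by intro _ _ _ _ h; simpa using h),
    Finset.sum_congr rfl fun k hk =>
      rval_altSegment_even n (Nat.lt_succ_iff.1 (Finset.mem_range.1 hk)),
    Finset.sum_add_distrib]
  have h_above : ∑ k ∈ Finset.range (n + 1), (if 0 < k then 1 else 0) = n := by
    rw [Finset.sum_range_succ']
    simp
  have h_below : ∑ k ∈ Finset.range (n + 1), (if k < n then 1 else 0) = n := by
    rw [Finset.sum_range_succ, Finset.sum_congr rfl fun k hk => if_pos (Finset.mem_range.1 hk)]
    simp
  simp only [Nat.succ_eq_add_one, h_above, h_below]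
  ring

end Alternating

/-- for 𝒰_▷ and y = −e₁, the alternating configuration on the segment
Y = {(0,j) : 0 ≤ j ≤ 2n} with η⁺ = {(0,2k) : 0 ≤ k ≤ n} has Σ_{u∈η⁻} r_u(η) = n and
Σ_{v∈η⁺} r_v(η) = 2n; in particular the fairness inequality fails. -/
theorem stmt16 (n : ℕ) (hn : 1 ≤ n) :
    let y : ℝ × ℝ := (-1, 0)
    let Y : Finset Pt := segmentY (0, 0) (0, 1) (2 * n + 1)
    let η : Pt → Bool := fun x => decide (x.2 % 2 = 0)
    (∑ u ∈ Y.filter (fun v => η v = false), rval Utri y Y η u) = n ∧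
    (∑ v ∈ Y.filter (fun v => η v = true), rval Utri y Y η v) = 2 * n ∧
    ¬ ((∑ v ∈ Y.filter (fun v => η v = true), rval Utri y Y η v) ≤
        ∑ u ∈ Y.filter (fun v => η v = false), rval Utri y Y η u) := by
  intro y Y η
  have h_minus := sum_rval_altSegment_minus n
  have h_plus := sum_rval_altSegment_plus n
  refine ⟨h_minus, h_plus, fun h => ?_⟩
  have : 2 * n ≤ n := (h_plus.symm.trans_le h).trans h_minus.le
  omega
end
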